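/- arXiv:1612.04182 — 5 statements merged into one kernel-verified Lean document; each statement's English description precedes it below -/
import Mathlib

section
/- Let E, F be real normed vector spaces, T > 0, and let f : E × ℝ → F satisfy the local Lipschitz condition uniformly in the second variable. Then for every continuous y : [0,T] → E there exist δ > 0 and L > 0 such that for all continuous y₁, y₂ : [0,T] → E with sup_{t∈[0,T]} ‖yᵢ(t) − y(t)‖_E ≤ δ (i = 1,2), all x₁, x₂ ∈ ℝ, and all t ∈ [0,T], one has the pointwise estimate ‖f(y₁(t),x₁) − f(y₂(t),x₂)‖_F ≤ L(‖y₁(t)−y₂(t)‖_E + |x₁−x₂|). In particular, (y,x) ↦ (t ↦ f(y(t),x)) is locally Lipschitz continuous from C([0,T];E) × ℝ to C([0,T];F). -/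
open Set Metric

/-- If `f : E × ℝ → F` satisfies the local Lipschitz condition uniformly in the second
variable, then for every continuous `y : [0,T] → E` there are `δ > 0` and `L > 0` such that
the pointwise Lipschitz estimate holds for all continuous `y₁, y₂` in the `δ`-tube around
`y`.  In particular, the Nemytskii map `(y,x) ↦ (t ↦ f(y(t),x))` is locally Lipschitz
continuous from `C([0,T];E) × ℝ` to `C([0,T];F)`. -/
theorem tube_lipschitz_estimate {E F : Type*}
    [NormedAddCommGroup E] [NormedSpace ℝ E]
    [NormedAddCommGroup F] [NormedSpace ℝ F]
    (f : E × ℝ → F)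
    (hf : ∀ e₀ : E, ∃ δ > (0 : ℝ), ∃ L > (0 : ℝ),
      ∀ e₁ e₂ : E, e₁ ∈ Metric.closedBall e₀ δ → e₂ ∈ Metric.closedBall e₀ δ →
        ∀ x₁ x₂ : ℝ, ‖f (e₁, x₁) - f (e₂, x₂)‖ ≤ L * (‖e₁ - e₂‖ + |x₁ - x₂|))
    (T : ℝ) (hT : 0 < T) :
    ∀ y : ℝ → E, ContinuousOn y (Set.Icc 0 T) →
      ∃ δ > (0 : ℝ), ∃ L > (0 : ℝ),
        ∀ y₁ y₂ : ℝ → E, ContinuousOn y₁ (Set.Icc 0 T) → ContinuousOn y₂ (Set.Icc 0 T) →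
          (∀ t ∈ Set.Icc (0 : ℝ) T, ‖y₁ t - y t‖ ≤ δ) →
          (∀ t ∈ Set.Icc (0 : ℝ) T, ‖y₂ t - y t‖ ≤ δ) →
          ∀ x₁ x₂ : ℝ, ∀ t ∈ Set.Icc (0 : ℝ) T,
            ‖f (y₁ t, x₁) - f (y₂ t, x₂)‖ ≤ L * (‖y₁ t - y₂ t‖ + |x₁ - x₂|) := by
  intro y hy
  classical
  choose δ hδ L hL H using hf
  have hK : IsCompact (y '' Set.Icc 0 T) := (isCompact_Icc).image_of_continuousOn hy
  have hcov : y '' Set.Icc 0 T ⊆ ⋃ e ∈ y '' Set.Icc 0 T, ball e (δ e / 2) := by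
    intro p hp
    exact mem_biUnion hp (mem_ball_self (by linarith [hδ p]))
  obtain ⟨b, hbsub, hbfin, hbcov⟩ := hK.elim_finite_subcover_image
    (fun e _ => isOpen_ball) hcov
  have hne : (hbfin.toFinset).Nonempty := by
    rcases Set.eq_empty_or_nonempty b with rfl | h
    · exfalso
      have : y 0 ∈ y '' Set.Icc 0 T := ⟨0, ⟨le_refl 0, hT.le⟩, rfl⟩
      simpa using hbcov this
    · exact (Set.Finite.toFinset_nonempty hbfin).2 h
  set s := hbfin.toFinset
  refine ⟨s.inf' hne (fun e => δ e / 2), ?_, s.sup' hne L, ?_, ?_⟩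
  · exact (Finset.lt_inf'_iff hne).2 fun e _ => by linarith [hδ e]
  · obtain ⟨e, he⟩ := hne
    exact lt_of_lt_of_le (hL e) (Finset.le_sup' L he)
  · intro y₁ y₂ hy₁ hy₂ h1 h2 x₁ x₂ t ht
    have hyt : y t ∈ ⋃ e ∈ b, ball e (δ e / 2) := hbcov ⟨t, ht, rfl⟩
    obtain ⟨e, heb, hye⟩ := Set.mem_iUnion₂.1 hyt
    have hes : e ∈ s := hbfin.mem_toFinset.2 heb
    have hinf : s.inf' hne (fun e => δ e / 2) ≤ δ e / 2 := Finset.inf'_le _ hes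
    have hyed : ‖y t - e‖ < δ e / 2 := by
      rw [← dist_eq_norm]; exact hye
    have key : ∀ z : ℝ → E, (∀ t ∈ Set.Icc (0:ℝ) T, ‖z t - y t‖ ≤ s.inf' hne (fun e => δ e / 2)) →
        z t ∈ Metric.closedBall e (δ e) := by
      intro z hz
      rw [Metric.mem_closedBall, dist_eq_norm]
      calc ‖z t - e‖ ≤ ‖z t - y t‖ + ‖y t - e‖ := by
            simpa using norm_sub_le_norm_sub_add_norm_sub (z t) (y t) e
        _ ≤ δ e / 2 + δ e / 2 := add_le_add (le_trans (hz t ht) hinf) hyed.le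
        _ = δ e := by ring
    calc ‖f (y₁ t, x₁) - f (y₂ t, x₂)‖ ≤ L e * (‖y₁ t - y₂ t‖ + |x₁ - x₂|) :=
          H e (y₁ t) (y₂ t) (key y₁ h1) (key y₂ h2) x₁ x₂
      _ ≤ s.sup' hne L * (‖y₁ t - y₂ t‖ + |x₁ - x₂|) := by
          apply mul_le_mul_of_nonneg_right (Finset.le_sup' L hes)
          positivity
end

section
/- Let T > 0, α ∈ (0,1), c₀ ≥ 0. There exists a constant C = C(α, c₀, T) > 0 such that the following holds: for every c₁ ≥ 0 and every continuous nonnegative ψ : [0,T] → ℝ satisfying ψ(t) ≤ c₀ ∫₀ᵗ (t−s)^{−α} m_ψ(s) ds + c₁ for all t ∈ [0,T], where m_ψ(s) = sup_{0≤τ≤s} ψ(τ), one has sup_{0≤t≤T} ψ(t) ≤ C · c₁. -/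
/-!
Weight by `e^{-r t}`. Since `∫₀ᵗ (t-s)^{-α} e^{r s} ds ≤ Γ(1-α) r^{α-1} e^{r t}`, the bound
`m_ψ(s) ≤ N e^{r s}`, with `N` the supremum of `e^{-r t} ψ(t)`, turns the hypothesis into
`e^{-r t} ψ(t) ≤ c₀ Γ(1-α) r^{α-1} N + c₁`. For `r` large the coefficient of `N` is at most `1/2`,
so `N ≤ 2 c₁` and `sup ψ ≤ 2 e^{r T} c₁`.
-/

open Set MeasureTheory Real

lemma integrableOn_rpow_mul_exp_neg_mul_Ioi {a r : ℝ} (ha : 0 < a) (hr : 0 < r) :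
    IntegrableOn (fun u : ℝ => u ^ (a - 1) * exp (-(r * u))) (Ioi 0) := by
  simpa using integrableOn_rpow_mul_exp_neg_mul_rpow (s := a - 1) (by linarith) one_pos hr

lemma intervalIntegrable_sub_rpow_neg_mul_exp {α : ℝ} (hα : α < 1) (r t : ℝ) :
    IntervalIntegrable (fun s => (t - s) ^ (-α) * exp (r * s)) volume 0 t := by
  have hker : IntervalIntegrable (fun s => (t - s) ^ (-α)) volume 0 t := by
    simpa using (intervalIntegral.intervalIntegrable_rpow' (a := t) (b := 0)
      (r := -α) (by linarith)).comp_sub_left t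
  exact hker.mul_continuousOn (by fun_prop)

lemma integral_sub_rpow_neg_mul_exp_le {α r t : ℝ} (hα : α < 1) (hr : 0 < r) (ht : 0 ≤ t) :
    ∫ s in Ioc 0 t, (t - s) ^ (-α) * exp (r * s)
      ≤ (1 / r) ^ (1 - α) * Gamma (1 - α) * exp (r * t) := by
  have hsubst : ∫ s in Ioc 0 t, (t - s) ^ (-α) * exp (r * s)
      = exp (r * t) * ∫ u in Ioc 0 t, u ^ ((1 - α) - 1) * exp (-(r * u)) := by
    rw [← intervalIntegral.integral_of_le ht, ← intervalIntegral.integral_of_le ht,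
      ← intervalIntegral.integral_const_mul]
    have := intervalIntegral.integral_comp_sub_left
      (fun u => exp (r * t) * (u ^ ((1 - α) - 1) * exp (-(r * u)))) (a := 0) (b := t) t
    simp only [sub_self, sub_zero] at this
    rw [← this]
    congr 1 with s
    rw [mul_left_comm, ← exp_add]
    ring_nf
  have hIoi : ∫ u in Ioc 0 t, u ^ ((1 - α) - 1) * exp (-(r * u))
      ≤ ∫ u in Ioi 0, u ^ ((1 - α) - 1) * exp (-(r * u)) :=
    setIntegral_mono_set (integrableOn_rpow_mul_exp_neg_mul_Ioi (by linarith) hr)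
      (ae_restrict_of_forall_mem measurableSet_Ioi fun u hu =>
        mul_nonneg (rpow_nonneg (le_of_lt hu) _) (exp_pos _).le)
      Ioc_subset_Ioi_self.eventuallyLE
  rw [integral_rpow_mul_exp_neg_mul_Ioi (by linarith) hr] at hIoi
  rw [hsubst, mul_comm]
  exact mul_le_mul_of_nonneg_right hIoi (exp_pos _).le

lemma exists_pos_mul_one_div_rpow_le {β : ℝ} (hβ : 0 < β) (K : ℝ) {ε : ℝ} (hε : 0 < ε) :
    ∃ r > 0, K * (1 / r) ^ β ≤ ε := by
  have hlim : Filter.Tendsto (fun r : ℝ => K * (1 / r) ^ β) Filter.atTop (nhds 0) := by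
    have := (tendsto_rpow_neg_atTop hβ).const_mul K
    rw [mul_zero] at this
    refine this.congr' ?_
    filter_upwards [Filter.eventually_gt_atTop 0] with r hr
    rw [one_div, inv_rpow hr.le, rpow_neg hr.le]
  exact ((Filter.eventually_gt_atTop 0).and (hlim.eventually (Iic_mem_nhds hε))).exists

section RunningSup

variable {ψ : ℝ → ℝ} {T N r : ℝ}

lemma sSup_image_Icc_nonneg (hψ0 : ∀ τ ∈ Icc 0 T, 0 ≤ ψ τ) {s : ℝ} (hs : s ≤ T) :
    0 ≤ sSup (ψ '' Icc 0 s) :=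
  Real.sSup_nonneg <| forall_mem_image.2 fun τ hτ => hψ0 τ ⟨hτ.1, hτ.2.trans hs⟩

lemma le_sSup_image_exp_neg_mul_mul_exp (hψc : ContinuousOn ψ (Icc 0 T)) {τ : ℝ}
    (hτ : τ ∈ Icc 0 T) : ψ τ ≤ sSup ((fun σ => exp (-(r * σ)) * ψ σ) '' Icc 0 T) * exp (r * τ) := by
  have hbdd : BddAbove ((fun σ => exp (-(r * σ)) * ψ σ) '' Icc 0 T) :=
    (isCompact_Icc.image_of_continuousOn (by fun_prop)).bddAbove
  have := le_csSup hbdd (mem_image_of_mem _ hτ)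
  rwa [exp_neg, ← div_eq_inv_mul, div_le_iff₀ (exp_pos _)] at this

lemma sSup_image_Icc_le_mul_exp (hN : 0 ≤ N) (hr : 0 ≤ r)
    (hψN : ∀ τ ∈ Icc 0 T, ψ τ ≤ N * exp (r * τ)) {s : ℝ} (hs : s ≤ T) :
    sSup (ψ '' Icc 0 s) ≤ N * exp (r * s) :=
  Real.sSup_le (forall_mem_image.2 fun τ hτ => (hψN τ ⟨hτ.1, hτ.2.trans hs⟩).trans <| by
    gcongr; exact hτ.2) (by positivity)

lemma integral_sub_rpow_neg_mul_sSup_image_Icc_le {α : ℝ} (hα : α < 1) (hr : 0 < r)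
    (hψ0 : ∀ τ ∈ Icc 0 T, 0 ≤ ψ τ) (hN : 0 ≤ N) (hψN : ∀ τ ∈ Icc 0 T, ψ τ ≤ N * exp (r * τ))
    {t : ℝ} (ht : t ∈ Icc 0 T) :
    ∫ s in Ioc 0 t, (t - s) ^ (-α) * sSup (ψ '' Icc 0 s)
      ≤ (1 / r) ^ (1 - α) * Gamma (1 - α) * (N * exp (r * t)) := by
  have hle : ∀ s ∈ Ioc 0 t, (t - s) ^ (-α) * sSup (ψ '' Icc 0 s)
      ≤ N * ((t - s) ^ (-α) * exp (r * s)) := fun s hs => by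
    rw [mul_left_comm]
    exact mul_le_mul_of_nonneg_left (sSup_image_Icc_le_mul_exp hN hr.le hψN (hs.2.trans ht.2))
      (rpow_nonneg (sub_nonneg.2 hs.2) _)
  -- `integral_mono_of_nonneg` needs no measurability of the running supremum.
  calc ∫ s in Ioc 0 t, (t - s) ^ (-α) * sSup (ψ '' Icc 0 s)
      ≤ ∫ s in Ioc 0 t, N * ((t - s) ^ (-α) * exp (r * s)) := by
        refine integral_mono_of_nonneg (ae_restrict_of_forall_mem measurableSet_Ioc fun s hs => ?_)
          ((intervalIntegrable_sub_rpow_neg_mul_exp hα r t).1.const_mul N)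
          (ae_restrict_of_forall_mem measurableSet_Ioc hle)
        exact mul_nonneg (rpow_nonneg (sub_nonneg.2 hs.2) _)
          (sSup_image_Icc_nonneg hψ0 (hs.2.trans ht.2))
    _ = N * ∫ s in Ioc 0 t, (t - s) ^ (-α) * exp (r * s) := integral_const_mul N _
    _ ≤ N * ((1 / r) ^ (1 - α) * Gamma (1 - α) * exp (r * t)) :=
        mul_le_mul_of_nonneg_left (integral_sub_rpow_neg_mul_exp_le hα hr ht.1) hN
    _ = (1 / r) ^ (1 - α) * Gamma (1 - α) * (N * exp (r * t)) := by ring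

end RunningSup

theorem singular_gronwall_general (T α c₀ : ℝ)
    (hα : α ∈ Set.Ioo (0 : ℝ) 1) (hc₀ : 0 ≤ c₀) :
    ∃ C > (0 : ℝ), ∀ c₁ : ℝ, 0 ≤ c₁ →
      ∀ ψ : ℝ → ℝ, ContinuousOn ψ (Set.Icc 0 T) →
        (∀ t ∈ Set.Icc (0 : ℝ) T, 0 ≤ ψ t) →
        (∀ t ∈ Set.Icc (0 : ℝ) T,
          ψ t ≤ c₀ * (∫ s in Set.Ioc (0 : ℝ) t, (t - s) ^ (-α) * sSup (ψ '' Set.Icc (0 : ℝ) s)) + c₁) →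
        sSup (ψ '' Set.Icc (0 : ℝ) T) ≤ C * c₁ := by
  obtain ⟨r, hr, hsmall⟩ := exists_pos_mul_one_div_rpow_le (sub_pos.2 hα.2)
    (c₀ * Gamma (1 - α)) (one_half_pos : (0 : ℝ) < 1 / 2)
  refine ⟨2 * exp (r * T), by positivity, fun c₁ hc₁ ψ hψc hψ0 hineq => ?_⟩
  set N := sSup ((fun τ => exp (-(r * τ)) * ψ τ) '' Icc 0 T)
  have hN0 : 0 ≤ N := Real.sSup_nonneg <| forall_mem_image.2 fun τ hτ =>
    mul_nonneg (exp_pos _).le (hψ0 τ hτ)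
  have hψN : ∀ τ ∈ Icc 0 T, ψ τ ≤ N * exp (r * τ) := fun τ hτ =>
    le_sSup_image_exp_neg_mul_mul_exp hψc hτ
  have hweighted : ∀ t ∈ Icc 0 T, exp (-(r * t)) * ψ t ≤ N / 2 + c₁ := fun t ht => by
    have hint := integral_sub_rpow_neg_mul_sSup_image_Icc_le hα.2 hr hψ0 hN0 hψN ht
    have hinv : exp (-(r * t)) * exp (r * t) = 1 := by rw [← exp_add, neg_add_cancel, exp_zero]
    have hexp : exp (-(r * t)) ≤ 1 := exp_le_one_iff.2 (neg_nonpos.2 (mul_nonneg hr.le ht.1))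
    calc exp (-(r * t)) * ψ t
        ≤ exp (-(r * t)) * (c₀ * ((1 / r) ^ (1 - α) * Gamma (1 - α) * (N * exp (r * t))) + c₁) := by
          grw [hineq t ht, hint]
      _ = c₀ * Gamma (1 - α) * (1 / r) ^ (1 - α) * N + exp (-(r * t)) * c₁ := by
          linear_combination (c₀ * Gamma (1 - α) * (1 / r) ^ (1 - α) * N) * hinv
      _ ≤ 1 / 2 * N + 1 * c₁ := by grw [hsmall, hexp]
      _ = N / 2 + c₁ := by ring
  have hN : N ≤ 2 * c₁ := by
    have := Real.sSup_le (forall_mem_image.2 hweighted) (by positivity)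
    linarith
  refine Real.sSup_le (forall_mem_image.2 fun τ hτ => (hψN τ hτ).trans ?_) (by positivity)
  calc N * exp (r * τ) ≤ 2 * c₁ * exp (r * T) := by gcongr; exact hτ.2
    _ = 2 * exp (r * T) * c₁ := by ring

/-- Gronwall-type lemma for the singular kernel `(t−s)^{−α}`: there is a constant
`C = C(α, c₀, T) > 0` such that every continuous nonnegative `ψ` satisfying
`ψ(t) ≤ c₀ ∫₀ᵗ (t−s)^{−α} m_ψ(s) ds + c₁` on `[0,T]`, with
`m_ψ(s) = sup_{0≤τ≤s} ψ(τ)`, obeys `sup_{0≤t≤T} ψ(t) ≤ C·c₁`. -/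
theorem singular_gronwall (T α c₀ : ℝ) (hT : 0 < T)
    (hα : α ∈ Set.Ioo (0 : ℝ) 1) (hc₀ : 0 ≤ c₀) :
    ∃ C > (0 : ℝ), ∀ c₁ : ℝ, 0 ≤ c₁ →
      ∀ ψ : ℝ → ℝ, ContinuousOn ψ (Set.Icc 0 T) →
        (∀ t ∈ Set.Icc (0 : ℝ) T, 0 ≤ ψ t) →
        (∀ t ∈ Set.Icc (0 : ℝ) T,
          ψ t ≤ c₀ * (∫ s in Set.Ioc (0 : ℝ) t, (t - s) ^ (-α) * sSup (ψ '' Set.Icc (0 : ℝ) s)) + c₁) →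
        sSup (ψ '' Set.Icc (0 : ℝ) T) ≤ C * c₁ :=
  singular_gronwall_general T α c₀ hα hc₀
end

section
/- Let E, F be real Banach spaces, T > 0, q ∈ (1,∞), and let f : E × ℝ → F be continuous. Let y : [0,T] → E be continuous, v ∈ L^q((0,T);ℝ), and suppose there are δ > 0 and L > 0 such that for every t ∈ [0,T], all e₁, e₂ ∈ E with ‖eᵢ − y(t)‖_E ≤ δ, and all x₁, x₂ ∈ ℝ one has ‖f(e₁,x₁) − f(e₂,x₂)‖_F ≤ L(‖e₁−e₂‖_E + |x₁−x₂|). Assume further that for every t ∈ [0,T], e ∈ E with ‖e − y(t)‖_E ≤ δ, x ∈ ℝ, and every direction (k,l) ∈ E × ℝ, the directional derivative D((e,x);(k,l)) := lim_{λ→0⁺} (f(e+λk, x+λl) − f(e,x))/λ exists in F. Then for every continuous h : [0,T] → E and every l ∈ L^q((0,T);ℝ), the difference quotients t ↦ (f(y(t)+λh(t), v(t)+λl(t)) − f(y(t),v(t)))/λ converge, as λ → 0⁺, in L^q((0,T);F) to the function t ↦ D((y(t),v(t));(h(t),l(t))). -/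
open Set MeasureTheory Filter Topology
open scoped ENNReal NNReal

/-!
Since `h` is bounded on `[0,T]`, say by `M`, for `0 < λ ≤ δ / M` the point `y(t) + λ h(t)` stays in
the `δ`-ball around `y(t)` where `f` is Lipschitz, so the difference quotient at time `t` is bounded
by `L (‖h(t)‖ + |l(t)|)` uniformly in `λ`, and so is its limit `D((y(t),v(t));(h(t),l(t)))`.
The bound lies in `L^q`, and the quotients converge pointwise by the definition of `D`,
so dominated convergence applies to `‖quotient - D‖^q ≤ (2L (‖h‖ + |l|))^q`.
-/

section DominatedConvergence

variable {α ι G : Type*} [MeasurableSpace α] {μ : Measure α} [NormedAddCommGroup G]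
  {l : Filter ι} [l.IsCountablyGenerated] [l.NeBot]

theorem tendsto_integral_norm_sub_rpow_of_dominated {F : ι → α → G} {f : α → G} {g : α → ℝ}
    {q : ℝ} (hq : 0 < q) (hF_meas : ∀ i, AEStronglyMeasurable (F i) μ)
    (hg : MemLp g (ENNReal.ofReal q) μ)
    (h_bound : ∀ᶠ i in l, ∀ᵐ a ∂μ, ‖F i a - f a‖ ≤ g a)
    (h_lim : ∀ᵐ a ∂μ, Tendsto (fun i => F i a) l (𝓝 (f a))) :
    Tendsto (fun i => ∫ a, ‖F i a - f a‖ ^ q ∂μ) l (𝓝 0) := by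
  have hf_meas : AEStronglyMeasurable f μ := aestronglyMeasurable_of_tendsto_ae l hF_meas h_lim
  have hg_int : Integrable (fun a => ‖g a‖ ^ q) μ := by
    simpa [ENNReal.toReal_ofReal hq.le] using
      hg.integrable_norm_rpow (by simpa using hq) ENNReal.ofReal_ne_top
  have h_lim_rpow : ∀ᵐ a ∂μ, Tendsto (fun i => ‖F i a - f a‖ ^ q) l (𝓝 0) := by
    filter_upwards [h_lim] with a ha
    have h_norm : Tendsto (fun i => ‖F i a - f a‖) l (𝓝 0) := by
      simpa using (ha.sub_const (f a)).norm
    simpa [Real.zero_rpow hq.ne'] using h_norm.rpow_const (Or.inr hq.le)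
  simpa using tendsto_integral_filter_of_dominated_convergence (fun a => ‖g a‖ ^ q)
    (Eventually.of_forall fun i =>
      (((hF_meas i).sub hf_meas).norm.aemeasurable.pow_const q).aestronglyMeasurable)
    (h_bound.mono fun i hi => hi.mono fun a ha => by
      rw [Real.norm_of_nonneg (by positivity)]
      exact Real.rpow_le_rpow (norm_nonneg _) (ha.trans (Real.le_norm_self _)) hq.le)
    hg_int h_lim_rpow

end DominatedConvergence

section DifferenceQuotient

variable {E F : Type*} [NormedAddCommGroup E] [NormedSpace ℝ E]
  [NormedAddCommGroup F] [NormedSpace ℝ F]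

noncomputable def diffQuotient (f : E × ℝ → F) (e : E) (x : ℝ) (k : E) (l : ℝ) (lam : ℝ) : F :=
  lam⁻¹ • (f (e + lam • k, x + lam * l) - f (e, x))

/-- Lipschitz continuity on `closedBall c δ × ℝ` for the `ℓ¹` norm `‖e‖ + |x|` on `E × ℝ`
(Mathlib's norm on a product is the sup norm). -/
def LipschitzOnSlab (f : E × ℝ → F) (c : E) (δ L : ℝ) : Prop :=
  ∀ e₁ e₂ : E, ‖e₁ - c‖ ≤ δ → ‖e₂ - c‖ ≤ δ →
    ∀ x₁ x₂ : ℝ, ‖f (e₁, x₁) - f (e₂, x₂)‖ ≤ L * (‖e₁ - e₂‖ + |x₁ - x₂|)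

namespace LipschitzOnSlab

variable {f : E × ℝ → F} {c k : E} {x l δ L lam : ℝ} {d : F}

theorem norm_diffQuotient_le (hf : LipschitzOnSlab f c δ L) (hlam : 0 < lam)
    (hk : lam * ‖k‖ ≤ δ) : ‖diffQuotient f c x k l lam‖ ≤ L * (‖k‖ + |l|) := by
  have hstep : ‖c + lam • k - c‖ = lam * ‖k‖ := by simp [norm_smul, abs_of_pos hlam]
  have hc : ‖c - c‖ ≤ δ := by simpa using (by positivity : 0 ≤ lam * ‖k‖).trans hk
  have hlip := hf _ c (hstep ▸ hk) hc (x + lam * l) x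
  rw [hstep, add_sub_cancel_left, abs_mul, abs_of_pos hlam] at hlip
  rw [diffQuotient, norm_smul, norm_inv, Real.norm_of_nonneg hlam.le, inv_mul_le_iff₀ hlam]
  linarith

theorem norm_le_of_tendsto_diffQuotient (hf : LipschitzOnSlab f c δ L) (hδ : 0 < δ)
    (hD : Tendsto (diffQuotient f c x k l) (𝓝[>] 0) (𝓝 d)) : ‖d‖ ≤ L * (‖k‖ + |l|) := by
  have h_small : ∀ᶠ lam in 𝓝[>] (0 : ℝ), lam * ‖k‖ < δ := by
    refine Tendsto.eventually_lt_const hδ ?_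
    exact ((continuous_id.mul continuous_const).tendsto' 0 0 (by simp)).mono_left
      nhdsWithin_le_nhds
  refine le_of_tendsto hD.norm ?_
  filter_upwards [self_mem_nhdsWithin, h_small] with lam hlam hk
  exact hf.norm_diffQuotient_le hlam hk.le

theorem norm_diffQuotient_sub_le (hf : LipschitzOnSlab f c δ L) (hδ : 0 < δ)
    (hD : Tendsto (diffQuotient f c x k l) (𝓝[>] 0) (𝓝 d)) (hlam : 0 < lam)
    (hk : lam * ‖k‖ ≤ δ) : ‖diffQuotient f c x k l lam - d‖ ≤ 2 * L * (‖k‖ + |l|) := by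
  calc ‖diffQuotient f c x k l lam - d‖ ≤ ‖diffQuotient f c x k l lam‖ + ‖d‖ := norm_sub_le _ _
    _ ≤ L * (‖k‖ + |l|) + L * (‖k‖ + |l|) :=
      add_le_add (hf.norm_diffQuotient_le hlam hk) (hf.norm_le_of_tendsto_diffQuotient hδ hD)
    _ = 2 * L * (‖k‖ + |l|) := by ring

end LipschitzOnSlab

theorem aestronglyMeasurable_diffQuotient {α : Type*} [MeasurableSpace α] {μ : Measure α}
    {f : E × ℝ → F} (hf : Continuous f) {y h : α → E} {v l : α → ℝ}
    (hy : AEStronglyMeasurable y μ) (hv : AEStronglyMeasurable v μ)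
    (hh : AEStronglyMeasurable h μ) (hl : AEStronglyMeasurable l μ) (lam : ℝ) :
    AEStronglyMeasurable (fun t => diffQuotient f (y t) (v t) (h t) (l t) lam) μ :=
  ((hf.comp_aestronglyMeasurable ((hy.add (hh.const_smul lam)).prodMk
    (hv.add (hl.const_smul lam)))).sub (hf.comp_aestronglyMeasurable (hy.prodMk hv))).const_smul _

end DifferenceQuotient

theorem nemytskii_diff_quotient_convergence_general {E F : Type*}
    [NormedAddCommGroup E] [NormedSpace ℝ E]
    [NormedAddCommGroup F] [NormedSpace ℝ F]
    (T : ℝ) (q : ℝ) (hq : 1 < q)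
    (f : E × ℝ → F) (hfc : Continuous f)
    (y : ℝ → E) (hy : ContinuousOn y (Set.Icc 0 T))
    (v : ℝ → ℝ) (hv : MemLp v (ENNReal.ofReal q) (volume.restrict (Set.Ioc 0 T)))
    (δ L : ℝ) (hδ : 0 < δ)
    (hlip : ∀ t ∈ Set.Icc (0 : ℝ) T, ∀ e₁ e₂ : E, ‖e₁ - y t‖ ≤ δ → ‖e₂ - y t‖ ≤ δ →
      ∀ x₁ x₂ : ℝ, ‖f (e₁, x₁) - f (e₂, x₂)‖ ≤ L * (‖e₁ - e₂‖ + |x₁ - x₂|))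
    (D : E × ℝ → E × ℝ → F)
    (hD : ∀ t ∈ Set.Icc (0 : ℝ) T, ∀ e : E, ‖e - y t‖ ≤ δ → ∀ x : ℝ, ∀ k : E, ∀ l : ℝ,
      Tendsto (fun lam : ℝ => lam⁻¹ • (f (e + lam • k, x + lam * l) - f (e, x)))
        (𝓝[>] (0 : ℝ)) (𝓝 (D (e, x) (k, l)))) :
    ∀ h : ℝ → E, ContinuousOn h (Set.Icc 0 T) →
      ∀ l : ℝ → ℝ, MemLp l (ENNReal.ofReal q) (volume.restrict (Set.Ioc 0 T)) →
        Tendsto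
          (fun lam : ℝ => ∫ t in Set.Ioc (0 : ℝ) T,
            ‖lam⁻¹ • (f (y t + lam • h t, v t + lam * l t) - f (y t, v t)) -
              D (y t, v t) (h t, l t)‖ ^ q)
          (𝓝[>] (0 : ℝ)) (𝓝 0) := by
  intro h hh l hl
  have h_mem : ∀ᵐ t ∂volume.restrict (Ioc 0 T), t ∈ Icc 0 T :=
    ae_restrict_of_forall_mem measurableSet_Ioc fun _ ht => Ioc_subset_Icc_self ht
  have h_lim : ∀ t ∈ Icc 0 T, Tendsto (diffQuotient f (y t) (v t) (h t) (l t)) (𝓝[>] 0)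
      (𝓝 (D (y t, v t) (h t, l t))) := fun t ht =>
    hD t ht (y t) (by simpa using hδ.le) (v t) (h t) (l t)
  obtain ⟨M, hM⟩ := isCompact_Icc.exists_bound_of_continuousOn hh
  have h_small : ∀ᶠ lam in 𝓝[>] (0 : ℝ), lam * M < δ :=
    Tendsto.eventually_lt_const hδ (((continuous_id.mul continuous_const).tendsto' 0 0
      (by simp)).mono_left nhdsWithin_le_nhds)
  have hh_meas : AEStronglyMeasurable h (volume.restrict (Ioc 0 T)) :=
    (hh.mono Ioc_subset_Icc_self).aestronglyMeasurable measurableSet_Ioc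
  refine tendsto_integral_norm_sub_rpow_of_dominated (g := fun t => 2 * L * (‖h t‖ + |l t|))
    (by linarith) (aestronglyMeasurable_diffQuotient hfc
      ((hy.mono Ioc_subset_Icc_self).aestronglyMeasurable measurableSet_Ioc)
      hv.aestronglyMeasurable hh_meas hl.aestronglyMeasurable) ?_ ?_ ?_
  · exact (((MemLp.of_bound hh_meas M (h_mem.mono hM)).norm.add hl.abs).const_mul _)
  · filter_upwards [self_mem_nhdsWithin, h_small] with lam hlam hlamM
    filter_upwards [h_mem] with t ht
    exact LipschitzOnSlab.norm_diffQuotient_sub_le (hlip t ht) hδ (h_lim t ht) hlam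
      ((mul_le_mul_of_nonneg_left (hM t ht) hlam.le).trans hlamM.le)
  · exact h_mem.mono h_lim

/-- Convergence of difference quotients of the Nemytskii operator in `L^q((0,T);F)`:
under a uniform Lipschitz condition of `f` in the `δ`-tube around a continuous `y` and
existence of directional derivatives `D` of `f` at all points of the tube, for continuous
`h : [0,T] → E` and `l ∈ L^q((0,T);ℝ)` the difference quotients
`t ↦ (f(y(t)+λh(t), v(t)+λl(t)) − f(y(t),v(t)))/λ` converge in `L^q((0,T);F)` as `λ → 0⁺`
to `t ↦ D((y(t),v(t));(h(t),l(t)))`. -/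
theorem nemytskii_diff_quotient_convergence {E F : Type*}
    [NormedAddCommGroup E] [NormedSpace ℝ E] [CompleteSpace E]
    [NormedAddCommGroup F] [NormedSpace ℝ F] [CompleteSpace F]
    (T : ℝ) (hT : 0 < T) (q : ℝ) (hq : 1 < q)
    (f : E × ℝ → F) (hfc : Continuous f)
    (y : ℝ → E) (hy : ContinuousOn y (Set.Icc 0 T))
    (v : ℝ → ℝ) (hv : MemLp v (ENNReal.ofReal q) (volume.restrict (Set.Ioc 0 T)))
    (δ L : ℝ) (hδ : 0 < δ) (hL : 0 < L)
    (hlip : ∀ t ∈ Set.Icc (0 : ℝ) T, ∀ e₁ e₂ : E, ‖e₁ - y t‖ ≤ δ → ‖e₂ - y t‖ ≤ δ →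
      ∀ x₁ x₂ : ℝ, ‖f (e₁, x₁) - f (e₂, x₂)‖ ≤ L * (‖e₁ - e₂‖ + |x₁ - x₂|))
    (D : E × ℝ → E × ℝ → F)
    (hD : ∀ t ∈ Set.Icc (0 : ℝ) T, ∀ e : E, ‖e - y t‖ ≤ δ → ∀ x : ℝ, ∀ k : E, ∀ l : ℝ,
      Tendsto (fun lam : ℝ => lam⁻¹ • (f (e + lam • k, x + lam * l) - f (e, x)))
        (𝓝[>] (0 : ℝ)) (𝓝 (D (e, x) (k, l)))) :
    ∀ h : ℝ → E, ContinuousOn h (Set.Icc 0 T) →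
      ∀ l : ℝ → ℝ, MemLp l (ENNReal.ofReal q) (volume.restrict (Set.Ioc 0 T)) →
        Tendsto
          (fun lam : ℝ => ∫ t in Set.Ioc (0 : ℝ) T,
            ‖lam⁻¹ • (f (y t + lam • h t, v t + lam * l t) - f (y t, v t)) -
              D (y t, v t) (h t, l t)‖ ^ q)
          (𝓝[>] (0 : ℝ)) (𝓝 0) :=
  nemytskii_diff_quotient_convergence_general T q hq f hfc y hy v hv δ L hδ hlip D hD
end

section
/- Let E be a real Banach space, T > 0, α ∈ (0,1), c ≥ 0, and let Ψ : C([0,T];E) → C([0,T];E) satisfy ‖Ψ(ζ₁)(t) − Ψ(ζ₂)(t)‖_E ≤ c ∫₀ᵗ (t−s)^{−α} sup_{0≤τ≤s} ‖ζ₁(τ) − ζ₂(τ)‖_E ds for all ζ₁, ζ₂ ∈ C([0,T];E) and t ∈ [0,T]. For each H ∈ C([0,T];E), the map ζ ↦ Ψ(ζ) + H has a unique fixed point ζ(H) ∈ C([0,T];E), and there exists a constant C = C(c, α, T) > 0 such that for all H₁, H₂ ∈ C([0,T];E), sup_{t∈[0,T]} ‖ζ(H₁)(t) − ζ(H₂)(t)‖_E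 ≤ C · sup_{t∈[0,T]} ‖H₁(t) − H₂(t)‖_E. In particular, H ↦ ζ(H) is Lipschitz continuous on C([0,T];E). -/
open Set MeasureTheory Filter

/-- If `Ψ` on `C([0,T];E)` satisfies the singular Volterra estimate, then for every
`H ∈ C([0,T];E)` the map `ζ ↦ Ψ(ζ) + H` has a unique fixed point `ζ(H)`, and
`H ↦ ζ(H)` is Lipschitz continuous in the supremum norm with a constant `C = C(c,α,T)`. -/
theorem volterra_fixed_point_lipschitz {E : Type*}
    [NormedAddCommGroup E] [NormedSpace ℝ E] [CompleteSpace E]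
    (T α c : ℝ) (hT : 0 < T) (hα : α ∈ Set.Ioo (0 : ℝ) 1) (hc : 0 ≤ c)
    (Ψ : C(Set.Icc (0 : ℝ) T, E) → C(Set.Icc (0 : ℝ) T, E))
    (hΨ : ∀ ζ₁ ζ₂ : C(Set.Icc (0 : ℝ) T, E), ∀ t : Set.Icc (0 : ℝ) T,
      ‖Ψ ζ₁ t - Ψ ζ₂ t‖ ≤
        c * ∫ s in Set.Ioc (0 : ℝ) (t : ℝ), ((t : ℝ) - s) ^ (-α) *
          sSup ((fun τ : Set.Icc (0 : ℝ) T => ‖ζ₁ τ - ζ₂ τ‖) ''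
            {τ : Set.Icc (0 : ℝ) T | (τ : ℝ) ≤ s})) :
    ∃ zfix : C(Set.Icc (0 : ℝ) T, E) → C(Set.Icc (0 : ℝ) T, E),
      (∀ H, Ψ (zfix H) + H = zfix H) ∧
      (∀ H ζ, Ψ ζ + H = ζ → ζ = zfix H) ∧
      ∃ C > (0 : ℝ), ∀ H₁ H₂, ‖zfix H₁ - zfix H₂‖ ≤ C * ‖H₁ - H₂‖ := by
  obtain ⟨hα0, hα1⟩ := hα
  have hrα : (-1 : ℝ) < -α := by linarith
  have hrpow_int : IntervalIntegrable (fun u : ℝ => u ^ (-α)) volume 0 T :=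
    intervalIntegral.intervalIntegrable_rpow' hrα
  have hbint : IntegrableOn (fun u : ℝ => u ^ (-α)) (Ioc 0 T) := hrpow_int.1
  have hmeas : ∀ n : ℕ, AEStronglyMeasurable
      (fun u : ℝ => u ^ (-α) * Real.exp (-((n:ℝ) * u))) (volume.restrict (Ioc 0 T)) := by
    intro n
    have hcont : ContinuousOn (fun u : ℝ => u ^ (-α) * Real.exp (-((n:ℝ) * u))) (Ioc 0 T) :=
      (continuousOn_id.rpow_const (fun x hx => Or.inl (ne_of_gt hx.1))).mul
        (Real.continuous_exp.comp ((continuous_const.mul continuous_id).neg)).continuousOn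
    exact hcont.aestronglyMeasurable measurableSet_Ioc
  have hJ : Tendsto (fun n : ℕ => ∫ u in Ioc (0:ℝ) T, u ^ (-α) * Real.exp (-((n:ℝ) * u)))
      atTop (nhds 0) := by
    have h0 : Tendsto (fun n : ℕ => ∫ u in Ioc (0:ℝ) T, u ^ (-α) * Real.exp (-((n:ℝ) * u)))
        atTop (nhds (∫ _u in Ioc (0:ℝ) T, (0:ℝ))) := by
      refine MeasureTheory.tendsto_integral_of_dominated_convergence
        (fun u : ℝ => u ^ (-α)) hmeas hbint ?_ ?_
      · intro n
        refine (ae_restrict_iff' measurableSet_Ioc).2 (Filter.Eventually.of_forall fun u hu => ?_)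
        have h1 : (0:ℝ) ≤ u ^ (-α) := Real.rpow_nonneg hu.1.le _
        have h2 : Real.exp (-((n:ℝ) * u)) ≤ 1 := by
          rw [Real.exp_le_one_iff]
          simp only [neg_nonpos]
          exact mul_nonneg (Nat.cast_nonneg n) hu.1.le
        rw [Real.norm_eq_abs, abs_of_nonneg (mul_nonneg h1 (Real.exp_pos _).le)]
        calc u ^ (-α) * Real.exp (-((n:ℝ) * u)) ≤ u ^ (-α) * 1 :=
              mul_le_mul_of_nonneg_left h2 h1
          _ = u ^ (-α) := mul_one _
      · refine (ae_restrict_iff' measurableSet_Ioc).2 (Filter.Eventually.of_forall fun u hu => ?_)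
        have : Tendsto (fun n : ℕ => u ^ (-α) * Real.exp (-((n:ℝ) * u))) atTop
            (nhds (u ^ (-α) * 0)) := by
          refine Tendsto.const_mul _ ?_
          have heq : ∀ n : ℕ, Real.exp (-((n:ℝ) * u)) = (Real.exp (-u)) ^ n := by
            intro n
            rw [← Real.exp_nat_mul]; ring_nf
          simp only [heq]
          exact tendsto_pow_atTop_nhds_zero_of_lt_one (Real.exp_pos _).le
            (Real.exp_lt_one_iff.2 (by linarith [hu.1]))
        simpa using this
    simpa using h0
  have hJc : Tendsto (fun n : ℕ => c * ∫ u in Ioc (0:ℝ) T, u ^ (-α) * Real.exp (-((n:ℝ) * u)))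
      atTop (nhds 0) := by simpa using hJ.const_mul c
  obtain ⟨n₀, hn₀⟩ := (hJc.eventually_lt_const (by norm_num : (0:ℝ) < 1/2)).exists
  set lam : ℝ := (n₀ : ℝ) with hlam_def
  have hlam0 : 0 ≤ lam := Nat.cast_nonneg n₀
  set g : ℝ → ℝ := fun u => u ^ (-α) * Real.exp (-(lam * u)) with hg_def
  set I : ℝ := ∫ u in Ioc (0:ℝ) T, g u with hI_def
  have hcI : c * I ≤ 1/2 := by
    rw [mul_comm c] at hn₀
    exact (mul_comm I c ▸ hn₀.le : c * I ≤ 1/2)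
  have hgcont : ContinuousOn g (Ioc 0 T) :=
    (continuousOn_id.rpow_const (fun x hx => Or.inl (ne_of_gt hx.1))).mul
      (Real.continuous_exp.comp ((continuous_const.mul continuous_id).neg)).continuousOn
  have hg_nonneg : ∀ u : ℝ, 0 ≤ u → 0 ≤ g u := fun u hu =>
    mul_nonneg (Real.rpow_nonneg hu _) (Real.exp_pos _).le
  have hgInt : IntervalIntegrable g volume 0 T :=
    hrpow_int.mul_continuousOn
      (Real.continuous_exp.comp ((continuous_const.mul continuous_id).neg)).continuousOn
  -- weighted norm
  haveI hne : Nonempty (Icc (0:ℝ) T) := ⟨⟨0, le_rfl, hT.le⟩⟩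
  obtain ⟨w, hw⟩ : ∃ w : C(Icc (0:ℝ) T, E) → ℝ,
      ∀ f, w f = ⨆ t : Icc (0:ℝ) T, Real.exp (-(lam * (t:ℝ))) * ‖f t‖ :=
    ⟨_, fun f => rfl⟩
  have hbdd : ∀ f : C(Icc (0:ℝ) T, E),
      BddAbove (range fun t : Icc (0:ℝ) T => Real.exp (-(lam * (t:ℝ))) * ‖f t‖) := by
    intro f
    exact (isCompact_range ((Real.continuous_exp.comp
      ((continuous_const.mul continuous_subtype_val).neg)).mul f.continuous.norm)).bddAbove
  have hwle : ∀ (f : C(Icc (0:ℝ) T, E)) (t : Icc (0:ℝ) T),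
      Real.exp (-(lam * (t:ℝ))) * ‖f t‖ ≤ w f := by
    intro f t
    rw [hw]
    exact le_ciSup (hbdd f) t
  have hw0 : ∀ f, 0 ≤ w f := fun f =>
    le_trans (mul_nonneg (Real.exp_pos _).le (norm_nonneg _)) (hwle f ⟨0, le_rfl, hT.le⟩)
  have hfw : ∀ (f : C(Icc (0:ℝ) T, E)) (t : Icc (0:ℝ) T),
      ‖f t‖ ≤ Real.exp (lam * (t:ℝ)) * w f := by
    intro f t
    have h1 := hwle f t
    have h2 : Real.exp (lam * (t:ℝ)) * Real.exp (-(lam * (t:ℝ))) = 1 := by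
      rw [← Real.exp_add]; simp
    calc ‖f t‖ = Real.exp (lam * (t:ℝ)) * (Real.exp (-(lam * (t:ℝ))) * ‖f t‖) := by
          rw [← mul_assoc, h2, one_mul]
      _ ≤ Real.exp (lam * (t:ℝ)) * w f :=
          mul_le_mul_of_nonneg_left h1 (Real.exp_pos _).le
  have hw_norm : ∀ f : C(Icc (0:ℝ) T, E), w f ≤ ‖f‖ := by
    intro f
    rw [hw]
    refine ciSup_le fun t => ?_
    have h1 : Real.exp (-(lam * (t:ℝ))) ≤ 1 := by
      rw [Real.exp_le_one_iff]
      simp only [neg_nonpos]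
      exact mul_nonneg hlam0 t.2.1
    calc Real.exp (-(lam * (t:ℝ))) * ‖f t‖ ≤ 1 * ‖f‖ :=
          mul_le_mul h1 (f.norm_coe_le_norm t) (norm_nonneg _) zero_le_one
      _ = ‖f‖ := one_mul _
  have hnorm_w : ∀ f : C(Icc (0:ℝ) T, E), ‖f‖ ≤ Real.exp (lam * T) * w f := by
    intro f
    refine (ContinuousMap.norm_le f (mul_nonneg (Real.exp_pos _).le (hw0 f))).2 fun t => ?_
    refine (hfw f t).trans (mul_le_mul_of_nonneg_right ?_ (hw0 f))
    exact Real.exp_le_exp.2 (mul_le_mul_of_nonneg_left t.2.2 hlam0)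
  -- main estimate
  have hmain : ∀ (ζ₁ ζ₂ : C(Icc (0:ℝ) T, E)) (t : Icc (0:ℝ) T),
      ‖Ψ ζ₁ t - Ψ ζ₂ t‖ ≤ 1/2 * (Real.exp (lam * (t:ℝ)) * w (ζ₁ - ζ₂)) := by
    intro ζ₁ ζ₂ t
    set L := w (ζ₁ - ζ₂) with hL_def
    have hL0 : 0 ≤ L := hw0 _
    have ht0 : (0:ℝ) ≤ (t:ℝ) := t.2.1
    have htT : (t:ℝ) ≤ T := t.2.2
    set M : ℝ → ℝ := fun s => sSup ((fun τ : Icc (0:ℝ) T => ‖ζ₁ τ - ζ₂ τ‖) ''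
      {τ : Icc (0:ℝ) T | (τ:ℝ) ≤ s}) with hM_def
    have hM0 : ∀ s, 0 ≤ M s := by
      intro s
      refine Real.sSup_nonneg fun x hx => ?_
      obtain ⟨τ, _, rfl⟩ := hx
      exact norm_nonneg _
    have hMle : ∀ s, 0 ≤ s → M s ≤ Real.exp (lam * s) * L := by
      intro s hs
      refine Real.sSup_le (fun x hx => ?_) (mul_nonneg (Real.exp_pos _).le hL0)
      obtain ⟨τ, hτ, rfl⟩ := hx
      show ‖ζ₁ τ - ζ₂ τ‖ ≤ Real.exp (lam * s) * L
      have h1 : ‖ζ₁ τ - ζ₂ τ‖ = ‖(ζ₁ - ζ₂) τ‖ := by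
        rw [ContinuousMap.sub_apply]
      rw [h1]
      refine (hfw (ζ₁ - ζ₂) τ).trans ?_
      exact mul_le_mul_of_nonneg_right
        (Real.exp_le_exp.2 (mul_le_mul_of_nonneg_left hτ hlam0)) hL0
    -- integrability of the comparison function
    have hgt : IntervalIntegrable g volume 0 (t:ℝ) := by
      refine hgInt.mono_set ?_
      rw [uIcc_of_le ht0, uIcc_of_le (ht0.trans htT)]
      exact Icc_subset_Icc_right htT
    have hcomp : IntervalIntegrable (fun s : ℝ => g ((t:ℝ) - s)) volume 0 (t:ℝ) := by
      simpa using (hgt.comp_sub_left (t:ℝ)).symm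
    have hint2 : IntegrableOn
        (fun s : ℝ => Real.exp (lam * (t:ℝ)) * L * g ((t:ℝ) - s)) (Ioc 0 (t:ℝ)) :=
      (hcomp.1).const_mul _
    have hexp_eq : ∀ s : ℝ, Real.exp (lam * (t:ℝ)) * Real.exp (-(lam * ((t:ℝ) - s)))
        = Real.exp (lam * s) := by
      intro s
      rw [← Real.exp_add]
      ring_nf
    have step1 : (∫ s in Ioc (0:ℝ) (t:ℝ), ((t:ℝ) - s) ^ (-α) * M s)
        ≤ ∫ s in Ioc (0:ℝ) (t:ℝ), Real.exp (lam * (t:ℝ)) * L * g ((t:ℝ) - s) := by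
      refine integral_mono_of_nonneg ?_ hint2 ?_
      · refine (ae_restrict_iff' measurableSet_Ioc).2 (Filter.Eventually.of_forall fun s hs => ?_)
        exact mul_nonneg (Real.rpow_nonneg (sub_nonneg.2 hs.2) _) (hM0 s)
      · refine (ae_restrict_iff' measurableSet_Ioc).2 (Filter.Eventually.of_forall fun s hs => ?_)
        have h1 : ((t:ℝ) - s) ^ (-α) * M s ≤ ((t:ℝ) - s) ^ (-α) * (Real.exp (lam * s) * L) :=
          mul_le_mul_of_nonneg_left (hMle s hs.1.le) (Real.rpow_nonneg (sub_nonneg.2 hs.2) _)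
        refine h1.trans_eq ?_
        rw [hg_def]
        dsimp only
        rw [← hexp_eq s]
        ring
    have step2 : (∫ s in Ioc (0:ℝ) (t:ℝ), Real.exp (lam * (t:ℝ)) * L * g ((t:ℝ) - s))
        = Real.exp (lam * (t:ℝ)) * L * ∫ s in Ioc (0:ℝ) (t:ℝ), g ((t:ℝ) - s) :=
      integral_const_mul _ _
    have step3 : (∫ s in Ioc (0:ℝ) (t:ℝ), g ((t:ℝ) - s)) = ∫ s in Ioc (0:ℝ) (t:ℝ), g s := by
      rw [← intervalIntegral.integral_of_le ht0, ← intervalIntegral.integral_of_le ht0]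
      have := intervalIntegral.integral_comp_sub_left (a := 0) (b := (t:ℝ)) g (t:ℝ)
      simpa using this
    have step4 : (∫ s in Ioc (0:ℝ) (t:ℝ), g s) ≤ I := by
      rw [hI_def]
      refine setIntegral_mono_set hgInt.1 ?_ ?_
      · refine (ae_restrict_iff' measurableSet_Ioc).2 (Filter.Eventually.of_forall fun s hs => ?_)
        exact hg_nonneg s hs.1.le
      · exact HasSubset.Subset.eventuallyLE (Ioc_subset_Ioc_right htT)
    have hfinal : ‖Ψ ζ₁ t - Ψ ζ₂ t‖ ≤ c * (Real.exp (lam * (t:ℝ)) * L * I) := by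
      refine (hΨ ζ₁ ζ₂ t).trans ?_
      refine mul_le_mul_of_nonneg_left ?_ hc
      calc (∫ s in Ioc (0:ℝ) (t:ℝ), ((t:ℝ) - s) ^ (-α) * M s)
          ≤ Real.exp (lam * (t:ℝ)) * L * ∫ s in Ioc (0:ℝ) (t:ℝ), g ((t:ℝ) - s) :=
            step1.trans_eq step2
        _ = Real.exp (lam * (t:ℝ)) * L * ∫ s in Ioc (0:ℝ) (t:ℝ), g s := by rw [step3]
        _ ≤ Real.exp (lam * (t:ℝ)) * L * I :=
            mul_le_mul_of_nonneg_left step4 (mul_nonneg (Real.exp_pos _).le hL0)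
    refine hfinal.trans ?_
    have : c * (Real.exp (lam * (t:ℝ)) * L * I) = (c * I) * (Real.exp (lam * (t:ℝ)) * L) := by
      ring
    rw [this]
    exact mul_le_mul_of_nonneg_right hcI (mul_nonneg (Real.exp_pos _).le hL0)
  -- contraction in weighted norm
  have hcontr_w : ∀ (H ζ₁ ζ₂ : C(Icc (0:ℝ) T, E)),
      w ((Ψ ζ₁ + H) - (Ψ ζ₂ + H)) ≤ 1/2 * w (ζ₁ - ζ₂) := by
    intro H ζ₁ ζ₂
    rw [hw]
    refine ciSup_le fun t => ?_
    have h1 : ((Ψ ζ₁ + H) - (Ψ ζ₂ + H)) t = Ψ ζ₁ t - Ψ ζ₂ t := by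
      simp [ContinuousMap.sub_apply, ContinuousMap.add_apply]
    rw [h1]
    have h2 := hmain ζ₁ ζ₂ t
    have h3 : Real.exp (-(lam * (t:ℝ))) * ‖Ψ ζ₁ t - Ψ ζ₂ t‖
        ≤ Real.exp (-(lam * (t:ℝ))) * (1/2 * (Real.exp (lam * (t:ℝ)) * w (ζ₁ - ζ₂))) :=
      mul_le_mul_of_nonneg_left h2 (Real.exp_pos _).le
    refine h3.trans_eq ?_
    have h4 : Real.exp (-(lam * (t:ℝ))) * Real.exp (lam * (t:ℝ)) = 1 := by
      rw [← Real.exp_add]; simp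
    calc Real.exp (-(lam * (t:ℝ))) * (1/2 * (Real.exp (lam * (t:ℝ)) * w (ζ₁ - ζ₂)))
        = (Real.exp (-(lam * (t:ℝ))) * Real.exp (lam * (t:ℝ))) * (1/2 * w (ζ₁ - ζ₂)) := by ring
      _ = 1/2 * w (ζ₁ - ζ₂) := by rw [h4, one_mul]
  -- iterates
  have hiter : ∀ (H : C(Icc (0:ℝ) T, E)) (n : ℕ) (ζ₁ ζ₂ : C(Icc (0:ℝ) T, E)),
      w ((fun ζ => Ψ ζ + H)^[n] ζ₁ - (fun ζ => Ψ ζ + H)^[n] ζ₂) ≤ (1/2)^n * w (ζ₁ - ζ₂) := by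
    intro H n
    induction n with
    | zero => intro ζ₁ ζ₂; simp
    | succ n ih =>
      intro ζ₁ ζ₂
      rw [Function.iterate_succ_apply', Function.iterate_succ_apply']
      calc w ((Ψ ((fun ζ => Ψ ζ + H)^[n] ζ₁) + H) - (Ψ ((fun ζ => Ψ ζ + H)^[n] ζ₂) + H))
          ≤ 1/2 * w ((fun ζ => Ψ ζ + H)^[n] ζ₁ - (fun ζ => Ψ ζ + H)^[n] ζ₂) :=
            hcontr_w H _ _
        _ ≤ 1/2 * ((1/2)^n * w (ζ₁ - ζ₂)) := by
            refine mul_le_mul_of_nonneg_left (ih ζ₁ ζ₂) (by norm_num)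
        _ = (1/2)^(n+1) * w (ζ₁ - ζ₂) := by ring
  -- choose iterate count
  obtain ⟨n, hn⟩ : ∃ n : ℕ, Real.exp (lam * T) * (1/2)^n ≤ 1/2 := by
    obtain ⟨n, hn⟩ := exists_pow_lt_of_lt_one
      (show (0:ℝ) < 1/2 / Real.exp (lam * T) by positivity)
      (by norm_num : (1/2 : ℝ) < 1)
    refine ⟨n, ?_⟩
    have h3 := (lt_div_iff₀ (Real.exp_pos (lam * T))).1 hn
    rw [mul_comm]
    exact h3.le
  haveI : Nonempty (C(Icc (0:ℝ) T, E)) := ⟨0⟩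
  have hcontr : ∀ H : C(Icc (0:ℝ) T, E),
      ContractingWith (1/2 : NNReal) ((fun ζ => Ψ ζ + H)^[n]) := by
    intro H
    constructor
    · rw [← NNReal.coe_lt_coe]; norm_num
    · refine LipschitzWith.of_dist_le_mul fun ζ₁ ζ₂ => ?_
      rw [dist_eq_norm, dist_eq_norm]
      have h1 : ‖(fun ζ => Ψ ζ + H)^[n] ζ₁ - (fun ζ => Ψ ζ + H)^[n] ζ₂‖
          ≤ Real.exp (lam * T) * ((1/2)^n * w (ζ₁ - ζ₂)) :=
        (hnorm_w _).trans (mul_le_mul_of_nonneg_left (hiter H n ζ₁ ζ₂) (Real.exp_pos _).le)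
      have h2 : Real.exp (lam * T) * ((1/2)^n * w (ζ₁ - ζ₂))
          = (Real.exp (lam * T) * (1/2)^n) * w (ζ₁ - ζ₂) := by ring
      have h3 : (Real.exp (lam * T) * (1/2)^n) * w (ζ₁ - ζ₂) ≤ 1/2 * w (ζ₁ - ζ₂) :=
        mul_le_mul_of_nonneg_right hn (hw0 _)
      have h4 : (1/2 : ℝ) * w (ζ₁ - ζ₂) ≤ 1/2 * ‖ζ₁ - ζ₂‖ :=
        mul_le_mul_of_nonneg_left (hw_norm _) (by norm_num)
      have h5 : ((1/2 : NNReal) : ℝ) = 1/2 := by norm_num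
      rw [h5]
      linarith
  refine ⟨fun H => ContractingWith.fixedPoint ((fun ζ => Ψ ζ + H)^[n]) (hcontr H), ?_, ?_, ?_⟩
  · intro H
    set x := ContractingWith.fixedPoint ((fun ζ => Ψ ζ + H)^[n]) (hcontr H) with hx_def
    have hx : (fun ζ => Ψ ζ + H)^[n] x = x := (hcontr H).fixedPoint_isFixedPt
    have hfx : Function.IsFixedPt ((fun ζ => Ψ ζ + H)^[n]) (Ψ x + H) := by
      show (fun ζ => Ψ ζ + H)^[n] ((fun ζ => Ψ ζ + H) x) = (fun ζ => Ψ ζ + H) x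
      rw [← Function.iterate_succ_apply, Function.iterate_succ_apply', hx]
    exact (hcontr H).fixedPoint_unique hfx
  · intro H ζ hζ
    have hfp : Function.IsFixedPt (fun ζ => Ψ ζ + H) ζ := hζ
    exact (hcontr H).fixedPoint_unique (hfp.iterate n)
  · refine ⟨2 * Real.exp (lam * T), by positivity, fun H₁ H₂ => ?_⟩
    set x₁ := ContractingWith.fixedPoint ((fun ζ => Ψ ζ + H₁)^[n]) (hcontr H₁) with hx₁_def
    set x₂ := ContractingWith.fixedPoint ((fun ζ => Ψ ζ + H₂)^[n]) (hcontr H₂) with hx₂_def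
    have hfx₁ : Ψ x₁ + H₁ = x₁ := by
      have hx : (fun ζ => Ψ ζ + H₁)^[n] x₁ = x₁ := (hcontr H₁).fixedPoint_isFixedPt
      have hfx : Function.IsFixedPt ((fun ζ => Ψ ζ + H₁)^[n]) (Ψ x₁ + H₁) := by
        show (fun ζ => Ψ ζ + H₁)^[n] ((fun ζ => Ψ ζ + H₁) x₁) = (fun ζ => Ψ ζ + H₁) x₁
        rw [← Function.iterate_succ_apply, Function.iterate_succ_apply', hx]
      exact (hcontr H₁).fixedPoint_unique hfx
    have hfx₂ : Ψ x₂ + H₂ = x₂ := by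
      have hx : (fun ζ => Ψ ζ + H₂)^[n] x₂ = x₂ := (hcontr H₂).fixedPoint_isFixedPt
      have hfx : Function.IsFixedPt ((fun ζ => Ψ ζ + H₂)^[n]) (Ψ x₂ + H₂) := by
        show (fun ζ => Ψ ζ + H₂)^[n] ((fun ζ => Ψ ζ + H₂) x₂) = (fun ζ => Ψ ζ + H₂) x₂
        rw [← Function.iterate_succ_apply, Function.iterate_succ_apply', hx]
      exact (hcontr H₂).fixedPoint_unique hfx
    have hd : w (x₁ - x₂) ≤ 1/2 * w (x₁ - x₂) + ‖H₁ - H₂‖ := by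
      conv_lhs => rw [hw]
      refine ciSup_le fun t => ?_
      have e1 : (x₁ - x₂) t = (Ψ x₁ t - Ψ x₂ t) + (H₁ - H₂) t := by
        conv_lhs => rw [← hfx₁, ← hfx₂]
        simp only [ContinuousMap.sub_apply, ContinuousMap.add_apply]
        abel
      have h1 : Real.exp (-(lam * (t:ℝ))) * ‖(x₁ - x₂) t‖
          ≤ Real.exp (-(lam * (t:ℝ))) * (‖Ψ x₁ t - Ψ x₂ t‖ + ‖(H₁ - H₂) t‖) := by
        refine mul_le_mul_of_nonneg_left ?_ (Real.exp_pos _).le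
        rw [e1]; exact norm_add_le _ _
      have hexp1 : Real.exp (-(lam * (t:ℝ))) ≤ 1 := by
        rw [Real.exp_le_one_iff]
        simp only [neg_nonpos]
        exact mul_nonneg hlam0 t.2.1
      have h2 : Real.exp (-(lam * (t:ℝ))) * ‖Ψ x₁ t - Ψ x₂ t‖ ≤ 1/2 * w (x₁ - x₂) := by
        have h3 : Real.exp (-(lam * (t:ℝ))) * ‖Ψ x₁ t - Ψ x₂ t‖
            ≤ Real.exp (-(lam * (t:ℝ))) * (1/2 * (Real.exp (lam * (t:ℝ)) * w (x₁ - x₂))) :=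
          mul_le_mul_of_nonneg_left (hmain x₁ x₂ t) (Real.exp_pos _).le
        refine h3.trans_eq ?_
        have h4 : Real.exp (-(lam * (t:ℝ))) * Real.exp (lam * (t:ℝ)) = 1 := by
          rw [← Real.exp_add]; simp
        calc Real.exp (-(lam * (t:ℝ))) * (1/2 * (Real.exp (lam * (t:ℝ)) * w (x₁ - x₂)))
            = (Real.exp (-(lam * (t:ℝ))) * Real.exp (lam * (t:ℝ))) * (1/2 * w (x₁ - x₂)) := by
              ring
          _ = 1/2 * w (x₁ - x₂) := by rw [h4, one_mul]
      have h5 : Real.exp (-(lam * (t:ℝ))) * ‖(H₁ - H₂) t‖ ≤ ‖H₁ - H₂‖ := by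
        calc Real.exp (-(lam * (t:ℝ))) * ‖(H₁ - H₂) t‖ ≤ 1 * ‖H₁ - H₂‖ :=
              mul_le_mul hexp1 ((H₁ - H₂).norm_coe_le_norm t) (norm_nonneg _) zero_le_one
          _ = ‖H₁ - H₂‖ := one_mul _
      calc Real.exp (-(lam * (t:ℝ))) * ‖(x₁ - x₂) t‖
          ≤ Real.exp (-(lam * (t:ℝ))) * ‖Ψ x₁ t - Ψ x₂ t‖
            + Real.exp (-(lam * (t:ℝ))) * ‖(H₁ - H₂) t‖ := by
            rw [← mul_add]; exact h1
        _ ≤ 1/2 * w (x₁ - x₂) + ‖H₁ - H₂‖ := add_le_add h2 h5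
    have hd2 : w (x₁ - x₂) ≤ 2 * ‖H₁ - H₂‖ := by linarith
    calc ‖x₁ - x₂‖ ≤ Real.exp (lam * T) * w (x₁ - x₂) := hnorm_w _
      _ ≤ Real.exp (lam * T) * (2 * ‖H₁ - H₂‖) :=
          mul_le_mul_of_nonneg_left hd2 (Real.exp_pos _).le
      _ = 2 * Real.exp (lam * T) * ‖H₁ - H₂‖ := by ring
end

section
/- Let E, F be real Banach spaces, T > 0, q ∈ (1,∞), and let f : E × ℝ → F be continuous, satisfy the local Lipschitz condition uniformly in the second variable, have the linear growth bound ‖f(e,x)‖_F ≤ M(1 + ‖e‖_E + |x|) for some M > 0, and be directionally differentiable at every point of E × ℝ in every direction of E × ℝ. Then the Nemytskii operator F̃ : C([0,T];E) × L^q((0,T);ℝ) → L^q((0,T);F), F̃(y,v)(t) = f(y(t),v(t)), is well defined and Hadamard directionally differentiable at every (y,v), with derivative given pointwise by F̃'[(y,v);(h,l)](t) = f'[(y(t),v(t));(h(t),l(t))]; moreover, for each fixed (y,v) the map (h,l) ↦ F̃'[(y,v);(h,l)] is Lipschitz continuous from C([0,T];E) × L^q((0,T);ℝ) to L^q((0,T);F).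 -/
/-!
If a function is Lipschitz near a point, its directional derivatives there are Hadamard
derivatives: the perturbation `r(λ)` changes the difference quotient by at most `L ‖r(λ)‖ / λ`.
So it suffices to show that the Nemytskii operator is directionally differentiable at `(y, v)`
and Lipschitz near it. Since `y` has compact range, the local Lipschitz constants of `f` can be
chosen uniformly along `t ↦ y(t)`. This makes the operator Lipschitz on a `C`-ball around `y`,
with no restriction on the `L^q`-component, and bounds the pointwise difference quotients by
`L (‖h‖ + |l(t)|)`, so that they converge in `L^q` by dominated convergence. The same pointwise
bound makes the derivative Lipschitz in the direction.
-/

open Set MeasureTheory Filter Topology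
open scoped ENNReal NNReal

/-- `g` is directionally differentiable at `x` in direction `h` with derivative `d`:
`(g(x+λh) − g(x))/λ → d` as `λ → 0⁺`. -/
def DirDerivAt {X Y : Type*} [NormedAddCommGroup X] [NormedSpace ℝ X]
    [NormedAddCommGroup Y] [NormedSpace ℝ Y] (g : X → Y) (x h : X) (d : Y) : Prop :=
  Tendsto (fun lam : ℝ => lam⁻¹ • (g (x + lam • h) - g x)) (𝓝[>] (0 : ℝ)) (𝓝 d)

/-- `g` is Hadamard directionally differentiable at `x` in direction `h` with derivative `d`. -/
def HadamardDerivAt {X Y : Type*} [NormedAddCommGroup X] [NormedSpace ℝ X]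
    [NormedAddCommGroup Y] [NormedSpace ℝ Y] (g : X → Y) (x h : X) (d : Y) : Prop :=
  DirDerivAt g x h d ∧
    ∀ r : ℝ → X, Tendsto (fun lam : ℝ => lam⁻¹ • r lam) (𝓝[>] (0 : ℝ)) (𝓝 (0 : X)) →
      Tendsto (fun lam : ℝ => lam⁻¹ • (g (x + lam • h + r lam) - g x)) (𝓝[>] (0 : ℝ)) (𝓝 d)

open Metric

section DirectionalDerivative

variable {X Y : Type*} [NormedAddCommGroup X] [NormedSpace ℝ X] [NormedAddCommGroup Y]
  [NormedSpace ℝ Y] {g : X → Y} {K : ℝ≥0} {U : Set X} {x : X}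

theorem LipschitzOnWith.norm_smul_sub_le (hg : LipschitzOnWith K g U) {p p' : X} (hp : p ∈ U)
    (hp' : p' ∈ U) (c : ℝ) : ‖c • (g p - g p')‖ ≤ K * ‖c • (p - p')‖ := by
  rw [norm_smul, norm_smul, mul_left_comm]
  exact mul_le_mul_of_nonneg_left (hg.norm_sub_le hp hp') (norm_nonneg c)

theorem tendsto_add_smul_nhdsGT (x d : X) :
    Tendsto (fun lam : ℝ => x + lam • d) (𝓝[>] 0) (𝓝 x) := by
  have : Tendsto (fun lam : ℝ => x + lam • d) (𝓝 0) (𝓝 x) := by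
    simpa using ((tendsto_id (x := 𝓝 (0 : ℝ))).smul_const d).const_add x
  exact this.mono_left nhdsWithin_le_nhds

theorem LipschitzOnWith.lipschitzWith_of_dirDerivAt (hU : U ∈ 𝓝 x) (hg : LipschitzOnWith K g U)
    {dg : X → Y} (hdg : ∀ d, DirDerivAt g x d (dg d)) : LipschitzWith K dg := by
  refine LipschitzWith.of_dist_le_mul fun d d' => ?_
  rw [dist_eq_norm, dist_eq_norm]
  refine le_of_tendsto ((hdg d).sub (hdg d')).norm ?_
  filter_upwards [(tendsto_add_smul_nhdsGT x d).eventually hU,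
    (tendsto_add_smul_nhdsGT x d').eventually hU, self_mem_nhdsWithin] with lam hd hd' hlam
  rw [← smul_sub, sub_sub_sub_cancel_right]
  refine (hg.norm_smul_sub_le hd hd' _).trans_eq ?_
  rw [add_sub_add_left_eq_sub, ← smul_sub, inv_smul_smul₀ (ne_of_gt hlam)]

theorem HadamardDerivAt.of_lipschitzOnWith (hU : U ∈ 𝓝 x) (hg : LipschitzOnWith K g U) {h : X}
    {d : Y} (hd : DirDerivAt g x h d) : HadamardDerivAt g x h d := by
  refine ⟨hd, fun r hr => ?_⟩
  have hr0 : Tendsto r (𝓝[>] 0) (𝓝 0) := by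
    have : Tendsto (fun lam : ℝ => lam • lam⁻¹ • r lam) (𝓝[>] 0) (𝓝 0) := by
      simpa using ((tendsto_id (x := 𝓝 (0 : ℝ))).mono_left nhdsWithin_le_nhds).smul hr
    refine this.congr' ?_
    filter_upwards [self_mem_nhdsWithin] with lam hlam
    rw [smul_inv_smul₀ (ne_of_gt hlam)]
  have hpert : Tendsto (fun lam : ℝ => x + lam • h + r lam) (𝓝[>] 0) (𝓝 x) := by
    simpa using (tendsto_add_smul_nhdsGT x h).add hr0
  have hrem : Tendsto (fun lam : ℝ => lam⁻¹ • (g (x + lam • h + r lam) - g (x + lam • h)))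
      (𝓝[>] 0) (𝓝 0) := by
    refine squeeze_zero_norm' ?_ (by simpa using hr.norm.const_mul (K : ℝ))
    filter_upwards [hpert.eventually hU, (tendsto_add_smul_nhdsGT x h).eventually hU]
      with lam hp hp'
    simpa using hg.norm_smul_sub_le hp hp' lam⁻¹
  simpa using (hd.add hrem).congr fun lam => by rw [← smul_add, sub_add_sub_cancel']

end DirectionalDerivative

section LipschitzOnProduct

theorem IsCompact.exists_forall_lipschitzOnWith_closedBall_prod {E X Y : Type*}
    [PseudoMetricSpace E] [PseudoEMetricSpace X] [PseudoEMetricSpace Y] {f : E × X → Y}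
    {K : Set E} (hK : IsCompact K)
    (hf : ∀ e, ∃ δ > 0, ∃ L, LipschitzOnWith L f (closedBall e δ ×ˢ univ)) :
    ∃ δ > 0, ∃ L, ∀ e ∈ K, LipschitzOnWith L f (closedBall e δ ×ˢ univ) := by
  choose δ hδ L hL using hf
  obtain ⟨t, ht⟩ := hK.elim_finite_subcover (fun e => ball e (δ e)) (fun _ => isOpen_ball)
    fun e _ => mem_iUnion.2 ⟨e, mem_ball_self (hδ e)⟩
  obtain ⟨ε, hε, hcov⟩ := lebesgue_number_lemma_of_metric hK
    (c := fun i : t => ball (i : E) (δ i)) (fun _ => isOpen_ball)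
    (by simpa [iUnion_subtype] using ht)
  refine ⟨ε / 2, half_pos hε, t.sup L, fun e he => ?_⟩
  obtain ⟨i, hi⟩ := hcov e he
  have hball : closedBall e (ε / 2) ⊆ closedBall i (δ i) :=
    (closedBall_subset_ball (half_lt_self hε)).trans (hi.trans ball_subset_closedBall)
  exact ((hL i).mono (prod_mono hball subset_rfl)).weaken (Finset.le_sup i.2)

theorem lipschitzOnWith_closedBall_prod_of_norm_sub_le {E F : Type*} [SeminormedAddCommGroup E]
    [SeminormedAddCommGroup F] {f : E × ℝ → F} {e₀ : E} {δ L : ℝ} (hL : 0 ≤ L)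
    (h : ∀ e₁ e₂ : E, ‖e₁ - e₀‖ ≤ δ → ‖e₂ - e₀‖ ≤ δ →
      ∀ x₁ x₂ : ℝ, ‖f (e₁, x₁) - f (e₂, x₂)‖ ≤ L * (‖e₁ - e₂‖ + |x₁ - x₂|)) :
    LipschitzOnWith (2 * L).toNNReal f (closedBall e₀ δ ×ˢ univ) := by
  refine LipschitzOnWith.of_dist_le_mul ?_
  rintro ⟨e₁, x₁⟩ ⟨h₁, -⟩ ⟨e₂, x₂⟩ ⟨h₂, -⟩
  rw [mem_closedBall_iff_norm] at h₁ h₂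
  have hsum : ‖e₁ - e₂‖ + |x₁ - x₂| ≤ 2 * dist (e₁, x₁) (e₂, x₂) := by
    rw [Prod.dist_eq, dist_eq_norm, Real.dist_eq]
    linarith [le_max_left ‖e₁ - e₂‖ |x₁ - x₂|, le_max_right ‖e₁ - e₂‖ |x₁ - x₂|]
  calc dist (f (e₁, x₁)) (f (e₂, x₂)) ≤ L * (‖e₁ - e₂‖ + |x₁ - x₂|) := by
        rw [dist_eq_norm]; exact h e₁ e₂ h₁ h₂ x₁ x₂
    _ ≤ L * (2 * dist (e₁, x₁) (e₂, x₂)) := by gcongr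
    _ = (2 * L).toNNReal * dist (e₁, x₁) (e₂, x₂) := by
        rw [Real.coe_toNNReal _ (by positivity)]; ring

theorem LipschitzOnWith.norm_diffQuot_le {E F G : Type*} [NormedAddCommGroup E]
    [NormedSpace ℝ E] [NormedAddCommGroup F] [NormedSpace ℝ F] [NormedAddCommGroup G]
    [NormedSpace ℝ G] {f : E × G → F} {p d : E × G} {δ : ℝ} {L : ℝ≥0}
    (hf : LipschitzOnWith L f (closedBall p.1 δ ×ˢ univ)) {lam : ℝ} (hlam : 0 < lam)
    (hsmall : lam * ‖d.1‖ ≤ δ) : ‖lam⁻¹ • (f (p + lam • d) - f p)‖ ≤ L * ‖d‖ := by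
  have hp : p ∈ closedBall p.1 δ ×ˢ univ :=
    ⟨mem_closedBall_self ((mul_nonneg hlam.le (norm_nonneg _)).trans hsmall), trivial⟩
  have hpd : p + lam • d ∈ closedBall p.1 δ ×ˢ univ := by
    refine ⟨?_, trivial⟩
    rwa [mem_closedBall_iff_norm, Prod.fst_add, add_sub_cancel_left, Prod.smul_fst, norm_smul,
      Real.norm_of_nonneg hlam.le]
  refine (hf.norm_smul_sub_le hpd hp _).trans_eq ?_
  rw [add_sub_cancel_left, inv_smul_smul₀ hlam.ne']

end LipschitzOnProduct

section Lp

variable {α F G : Type*} [MeasurableSpace α] {μ : Measure α} [NormedAddCommGroup F]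
  [NormedAddCommGroup G] {q : ℝ≥0∞}

theorem memLp_of_norm_le_add_mul [IsFiniteMeasure μ] {u : α → F} {w : α → G} {c L : ℝ}
    (hw : MemLp w q μ) (hu : AEStronglyMeasurable u μ) (h : ∀ᵐ t ∂μ, ‖u t‖ ≤ c + L * ‖w t‖) :
    MemLp u q μ :=
  ((memLp_const c).add (hw.norm.const_mul L)).of_le hu <|
    h.mono fun _ ht => ht.trans (le_abs_self _)

theorem Lp.norm_le_of_ae_norm_le_add_mul [IsFiniteMeasure μ] [Fact (1 ≤ q)] {u : Lp F q μ}
    {w : Lp G q μ} {c L : ℝ} (hc : 0 ≤ c) (hL : 0 ≤ L) (h : ∀ᵐ t ∂μ, ‖u t‖ ≤ c + L * ‖w t‖) :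
    ‖u‖ ≤ measureUnivNNReal μ ^ q.toReal⁻¹ * c + L * ‖w‖ := by
  have hbound : eLpNorm u q μ ≤
      μ univ ^ q.toReal⁻¹ * ENNReal.ofReal c + ENNReal.ofReal L * eLpNorm w q μ :=
    calc eLpNorm u q μ ≤ eLpNorm ((fun _ => c) + L • fun t => ‖w t‖) q μ :=
          eLpNorm_mono_ae_real h
      _ ≤ eLpNorm (fun _ => c) q μ + eLpNorm (L • fun t => ‖w t‖) q μ :=
          eLpNorm_add_le aestronglyMeasurable_const
            ((Lp.aestronglyMeasurable w).norm.const_smul L) Fact.out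
      _ ≤ μ univ ^ q.toReal⁻¹ * ENNReal.ofReal c + ENNReal.ofReal L * eLpNorm w q μ := by
          gcongr
          · exact eLpNorm_le_of_ae_bound (ae_of_all _ fun _ => (Real.norm_of_nonneg hc).le)
          · rw [eLpNorm_const_smul, eLpNorm_norm, Real.enorm_of_nonneg hL]
  rw [Lp.norm_def, Lp.norm_def]
  refine ENNReal.toReal_le_of_le_ofReal (by positivity) (hbound.trans_eq ?_)
  rw [ENNReal.ofReal_add (by positivity) (by positivity), ENNReal.ofReal_mul (by positivity),
    ENNReal.ofReal_mul hL, ENNReal.ofReal_toReal (Lp.eLpNorm_ne_top w), ← NNReal.coe_rpow,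
    ENNReal.ofReal_coe_nnreal, ENNReal.coe_rpow_of_nonneg _ (by positivity),
    coe_measureUnivNNReal]

theorem tendsto_eLpNorm_sub_of_dominated {ι : Type*} {l : Filter ι} [l.IsCountablyGenerated]
    {u : ι → α → G} {g : α → G} {bound : α → ℝ} (hq : q ≠ ⊤)
    (hu : ∀ᶠ i in l, AEStronglyMeasurable (u i) μ) (hg : MemLp g q μ) (hbound : MemLp bound q μ)
    (h_bound : ∀ᶠ i in l, ∀ᵐ t ∂μ, ‖u i t‖ ≤ bound t)
    (h_lim : ∀ᵐ t ∂μ, Tendsto (fun i => u i t) l (𝓝 (g t))) :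
    Tendsto (fun i => eLpNorm (u i - g) q μ) l (𝓝 0) := by
  rcases eq_or_ne q 0 with rfl | hq0
  · simpa using tendsto_const_nhds
  have hq_pos : 0 < q.toReal := ENNReal.toReal_pos hq0 hq
  have hint : Tendsto (fun i => ∫⁻ t, ‖u i t - g t‖ₑ ^ q.toReal ∂μ) l (𝓝 0) := by
    have hdom := (eLpNorm_lt_top_iff_lintegral_rpow_enorm_lt_top hq0 hq).1
      (hbound.add hg.norm).eLpNorm_lt_top
    simpa [ENNReal.zero_rpow_of_pos hq_pos] using
      tendsto_lintegral_filter_of_dominated_convergence' _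
        (hu.mono fun i hi => ((hi.sub hg.1).enorm).pow_const _)
        (h_bound.mono fun i hi => hi.mono fun t ht => ENNReal.rpow_le_rpow
          (enorm_le_iff_norm_le.2 ((norm_sub_le _ _).trans
            ((add_le_add_left ht _).trans (Real.le_norm_self _)))) hq_pos.le)
        hdom.ne
        (h_lim.mono fun t ht => ((ht.sub tendsto_const_nhds).enorm).ennrpow_const _)
  have := hint.ennrpow_const (1 / q.toReal)
  rw [ENNReal.zero_rpow_of_pos (by positivity)] at this
  refine this.congr fun i => ?_
  rw [eLpNorm_eq_lintegral_rpow_enorm_toReal hq0 hq]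
  rfl

end Lp

section Nemytskii

variable {E F G : Type*} [NormedAddCommGroup E] [NormedAddCommGroup F] [NormedAddCommGroup G]
  {a b : ℝ} (hab : a ≤ b) {q : ℝ≥0∞} {μ : Measure ℝ}

noncomputable def pairEval (z : C(Icc a b, E) × Lp G q μ) (t : ℝ) : E × G :=
  (IccExtend hab z.1 t, z.2 t)

theorem aestronglyMeasurable_pairEval (z : C(Icc a b, E) × Lp G q μ) :
    AEStronglyMeasurable (pairEval hab z) μ :=
  z.1.continuous.Icc_extend'.aestronglyMeasurable.prodMk (Lp.aestronglyMeasurable z.2)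

theorem norm_pairEval_le (z : C(Icc a b, E) × Lp G q μ) (t : ℝ) :
    ‖pairEval hab z t‖ ≤ ‖z.1‖ + ‖z.2 t‖ :=
  (Prod.norm_def _).trans_le <| (max_le_add_of_nonneg (norm_nonneg _) (norm_nonneg _)).trans <|
    add_le_add_left (z.1.norm_coe_le_norm _) _

theorem pairEval_add_smul_ae [NormedSpace ℝ E] [NormedSpace ℝ G]
    (z h : C(Icc a b, E) × Lp G q μ) (c : ℝ) :
    pairEval hab (z + c • h) =ᵐ[μ] pairEval hab z + c • pairEval hab h := by
  filter_upwards [Lp.coeFn_add z.2 (c • h.2), Lp.coeFn_smul c h.2] with t h₁ h₂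
  simp only [pairEval, Pi.add_apply, Pi.smul_apply, Prod.fst_add, Prod.snd_add, Prod.smul_fst,
    Prod.smul_snd, h₁, h₂]
  rfl

theorem pairEval_sub_ae (z z' : C(Icc a b, E) × Lp G q μ) :
    pairEval hab (z - z') =ᵐ[μ] pairEval hab z - pairEval hab z' := by
  filter_upwards [Lp.coeFn_sub z.2 z'.2] with t ht
  simp only [pairEval, Pi.sub_apply, Prod.fst_sub, Prod.snd_sub, ht]
  rfl

theorem pairEval_mem_closedBall_prod {z z₀ : C(Icc a b, E) × Lp G q μ} {δ : ℝ}
    (hz : z.1 ∈ closedBall z₀.1 δ) (t : ℝ) :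
    pairEval hab z t ∈ closedBall (pairEval hab z₀ t).1 δ ×ˢ univ :=
  ⟨(ContinuousMap.dist_apply_le_dist _).trans hz, trivial⟩

theorem lipschitzOnWith_of_ae_norm_sub_le_pairEval [IsFiniteMeasure μ] [Fact (1 ≤ q)]
    {Φ : C(Icc a b, E) × Lp G q μ → Lp F q μ} {s : Set (C(Icc a b, E) × Lp G q μ)} {L : ℝ≥0}
    (h : ∀ z ∈ s, ∀ z' ∈ s,
      ∀ᵐ t ∂μ, ‖Φ z t - Φ z' t‖ ≤ L * ‖pairEval hab z t - pairEval hab z' t‖) :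
    LipschitzOnWith (L * (measureUnivNNReal μ ^ q.toReal⁻¹ + 1)) Φ s := by
  refine LipschitzOnWith.of_dist_le_mul fun z hz z' hz' => ?_
  have hae : ∀ᵐ t ∂μ, ‖(Φ z - Φ z') t‖ ≤ L * ‖z.1 - z'.1‖ + L * ‖(z.2 - z'.2) t‖ := by
    filter_upwards [h z hz z' hz', Lp.coeFn_sub (Φ z) (Φ z'), pairEval_sub_ae hab z z']
      with t ht hΦ hP
    rw [hΦ, Pi.sub_apply, ← mul_add]
    refine ht.trans (mul_le_mul_of_nonneg_left ?_ L.2)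
    rw [← Pi.sub_apply (pairEval hab z), ← hP]
    exact norm_pairEval_le hab _ t
  have h₁ : ‖z.1 - z'.1‖ ≤ dist z z' := by
    rw [← dist_eq_norm, Prod.dist_eq]; exact le_max_left _ _
  have h₂ : ‖z.2 - z'.2‖ ≤ dist z z' := by
    rw [← dist_eq_norm, Prod.dist_eq]; exact le_max_right _ _
  rw [dist_eq_norm]
  calc ‖Φ z - Φ z'‖ ≤ measureUnivNNReal μ ^ q.toReal⁻¹ * (L * ‖z.1 - z'.1‖) + L * ‖z.2 - z'.2‖ :=
        Lp.norm_le_of_ae_norm_le_add_mul (by positivity) L.2 hae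
    _ ≤ measureUnivNNReal μ ^ q.toReal⁻¹ * (L * dist z z') + L * dist z z' := by gcongr
    _ = _ := by push_cast; ring

theorem exists_forall_lipschitzOnWith_closedBall_pairEval {f : E × G → F}
    (hf : ∀ e, ∃ δ > 0, ∃ L, LipschitzOnWith L f (closedBall e δ ×ˢ univ))
    (z₀ : C(Icc a b, E) × Lp G q μ) :
    ∃ δ > 0, ∃ L, ∀ t, LipschitzOnWith L f (closedBall (pairEval hab z₀ t).1 δ ×ˢ univ) := by
  obtain ⟨δ, hδ, L, hL⟩ :=
    (isCompact_range z₀.1.continuous).exists_forall_lipschitzOnWith_closedBall_prod hf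
  exact ⟨δ, hδ, L, fun t => hL _ (mem_range_self _)⟩

noncomputable def nemytskii {f : E × G → F}
    (hf : ∀ z : C(Icc a b, E) × Lp G q μ, MemLp (f ∘ pairEval hab z) q μ)
    (z : C(Icc a b, E) × Lp G q μ) : Lp F q μ :=
  (hf z).toLp _

theorem coeFn_nemytskii {f : E × G → F}
    (hf : ∀ z : C(Icc a b, E) × Lp G q μ, MemLp (f ∘ pairEval hab z) q μ)
    (z : C(Icc a b, E) × Lp G q μ) : nemytskii hab hf z =ᵐ[μ] f ∘ pairEval hab z :=
  (hf z).coeFn_toLp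

theorem memLp_comp_pairEval [IsFiniteMeasure μ] {f : E × G → F} (hf : Continuous f) {M : ℝ}
    (hM : 0 ≤ M) (hgrowth : ∀ p : E × G, ‖f p‖ ≤ M * (1 + ‖p.1‖ + ‖p.2‖))
    (z : C(Icc a b, E) × Lp G q μ) : MemLp (f ∘ pairEval hab z) q μ := by
  refine memLp_of_norm_le_add_mul (c := M * (1 + ‖z.1‖)) (L := M) (Lp.memLp z.2)
    (hf.comp_aestronglyMeasurable (aestronglyMeasurable_pairEval hab z))
    (ae_of_all _ fun t => ?_)
  calc ‖f (pairEval hab z t)‖ ≤ M * (1 + ‖(pairEval hab z t).1‖ + ‖z.2 t‖) := hgrowth _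
    _ ≤ M * (1 + ‖z.1‖ + ‖z.2 t‖) := by gcongr; exact z.1.norm_coe_le_norm _
    _ = M * (1 + ‖z.1‖) + M * ‖z.2 t‖ := by ring

theorem lipschitzOnWith_nemytskii [IsFiniteMeasure μ] [Fact (1 ≤ q)] {f : E × G → F}
    (hf : ∀ z : C(Icc a b, E) × Lp G q μ, MemLp (f ∘ pairEval hab z) q μ)
    {z₀ : C(Icc a b, E) × Lp G q μ} {δ : ℝ} {L : ℝ≥0}
    (hL : ∀ t, LipschitzOnWith L f (closedBall (pairEval hab z₀ t).1 δ ×ˢ univ)) :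
    LipschitzOnWith (L * (measureUnivNNReal μ ^ q.toReal⁻¹ + 1)) (nemytskii hab hf)
      (closedBall z₀.1 δ ×ˢ univ) :=
  lipschitzOnWith_of_ae_norm_sub_le_pairEval hab fun z hz z' hz' => by
    filter_upwards [coeFn_nemytskii hab hf z, coeFn_nemytskii hab hf z'] with t h h'
    rw [h, h']
    exact (hL t).norm_sub_le (pairEval_mem_closedBall_prod hab hz.1 t)
      (pairEval_mem_closedBall_prod hab hz'.1 t)

section DifferenceQuotient

variable [NormedSpace ℝ E] [NormedSpace ℝ F] [NormedSpace ℝ G] {f : E × G → F}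
  {z₀ h : C(Icc a b, E) × Lp G q μ} {δ : ℝ} {L : ℝ≥0}

theorem aestronglyMeasurable_diffQuot_pairEval (hf : Continuous f) (lam : ℝ) :
    AEStronglyMeasurable
      (fun t => lam⁻¹ • (f (pairEval hab z₀ t + lam • pairEval hab h t) - f (pairEval hab z₀ t)))
      μ :=
  ((hf.comp_aestronglyMeasurable ((aestronglyMeasurable_pairEval hab z₀).add
    ((aestronglyMeasurable_pairEval hab h).const_smul lam))).sub
    (hf.comp_aestronglyMeasurable (aestronglyMeasurable_pairEval hab z₀))).const_smul lam⁻¹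

theorem eventually_norm_diffQuot_pairEval_le (hδ : 0 < δ)
    (hL : ∀ t, LipschitzOnWith L f (closedBall (pairEval hab z₀ t).1 δ ×ˢ univ)) :
    ∀ᶠ lam in 𝓝[>] (0 : ℝ), ∀ t,
      ‖lam⁻¹ • (f (pairEval hab z₀ t + lam • pairEval hab h t) - f (pairEval hab z₀ t))‖
        ≤ L * ‖h.1‖ + L * ‖h.2 t‖ := by
  have hsmall : ∀ᶠ lam in 𝓝[>] (0 : ℝ), lam * ‖h.1‖ ≤ δ := by
    have : Tendsto (fun lam : ℝ => lam * ‖h.1‖) (𝓝[>] 0) (𝓝 0) := by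
      simpa using ((tendsto_id (x := 𝓝 (0 : ℝ))).mono_left nhdsWithin_le_nhds).mul_const ‖h.1‖
    exact this.eventually (ge_mem_nhds hδ)
  filter_upwards [hsmall, self_mem_nhdsWithin] with lam hsmall hlam t
  refine ((hL t).norm_diffQuot_le hlam ?_).trans ?_
  · exact (mul_le_mul_of_nonneg_left (h.1.norm_coe_le_norm _) (le_of_lt hlam)).trans hsmall
  · rw [← mul_add]
    exact mul_le_mul_of_nonneg_left (norm_pairEval_le hab h t) L.2

theorem memLp_of_dirDerivAt_pairEval [IsFiniteMeasure μ] (hf : Continuous f) (hδ : 0 < δ)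
    (hL : ∀ t, LipschitzOnWith L f (closedBall (pairEval hab z₀ t).1 δ ×ˢ univ)) {g : ℝ → F}
    (hg : ∀ t, DirDerivAt f (pairEval hab z₀ t) (pairEval hab h t) (g t)) : MemLp g q μ := by
  refine memLp_of_norm_le_add_mul (c := L * ‖h.1‖) (L := L) (Lp.memLp h.2)
    (aestronglyMeasurable_of_tendsto_ae _ (aestronglyMeasurable_diffQuot_pairEval hab hf)
      (ae_of_all _ hg)) (ae_of_all _ fun t => ?_)
  exact le_of_tendsto (hg t).norm
    ((eventually_norm_diffQuot_pairEval_le hab hδ hL).mono fun _ hlam => hlam t)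

theorem dirDerivAt_nemytskii [IsFiniteMeasure μ] [Fact (1 ≤ q)] (hq : q ≠ ⊤) (hf : Continuous f)
    (hfq : ∀ z : C(Icc a b, E) × Lp G q μ, MemLp (f ∘ pairEval hab z) q μ) (hδ : 0 < δ)
    (hL : ∀ t, LipschitzOnWith L f (closedBall (pairEval hab z₀ t).1 δ ×ˢ univ)) {g : ℝ → F}
    (hg : ∀ t, DirDerivAt f (pairEval hab z₀ t) (pairEval hab h t) (g t)) (hgq : MemLp g q μ) :
    DirDerivAt (nemytskii hab hfq) z₀ h (hgq.toLp g) := by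
  have hbound : MemLp (fun t => L * ‖h.1‖ + L * ‖h.2 t‖) q μ :=
    (memLp_const (L * ‖h.1‖ : ℝ)).add ((Lp.memLp h.2).norm.const_mul (L : ℝ))
  rw [DirDerivAt, Lp.tendsto_Lp_iff_tendsto_eLpNorm]
  refine (tendsto_eLpNorm_sub_of_dominated hq
    (Eventually.of_forall (aestronglyMeasurable_diffQuot_pairEval hab hf)) hgq hbound
    ((eventually_norm_diffQuot_pairEval_le hab hδ hL).mono fun _ hlam => ae_of_all _ hlam)
    (ae_of_all _ hg)).congr fun lam => eLpNorm_congr_ae ?_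
  filter_upwards [Lp.coeFn_smul lam⁻¹ (nemytskii hab hfq (z₀ + lam • h) - nemytskii hab hfq z₀),
    Lp.coeFn_sub (nemytskii hab hfq (z₀ + lam • h)) (nemytskii hab hfq z₀),
    coeFn_nemytskii hab hfq (z₀ + lam • h), coeFn_nemytskii hab hfq z₀,
    pairEval_add_smul_ae hab z₀ h lam] with t h₁ h₂ h₃ h₄ h₅
  simp only [Pi.sub_apply, Pi.smul_apply, Function.comp_apply, h₁, h₂, h₃, h₄, h₅, Pi.add_apply]

end DifferenceQuotient

end Nemytskii

theorem nemytskii_hadamard_differentiable_general {E F : Type*}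
    [NormedAddCommGroup E] [NormedSpace ℝ E]
    [NormedAddCommGroup F] [NormedSpace ℝ F]
    (T : ℝ) (hT : 0 < T) (q : ℝ≥0∞) (hq2 : q ≠ ⊤) [Fact (1 ≤ q)]
    (M : ℝ) (hM : 0 < M)
    (f : E × ℝ → F) (hfc : Continuous f)
    (hlip : ∀ e₀ : E, ∃ δ > (0 : ℝ), ∃ L > (0 : ℝ),
      ∀ e₁ e₂ : E, ‖e₁ - e₀‖ ≤ δ → ‖e₂ - e₀‖ ≤ δ →
        ∀ x₁ x₂ : ℝ, ‖f (e₁, x₁) - f (e₂, x₂)‖ ≤ L * (‖e₁ - e₂‖ + |x₁ - x₂|))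
    (hgrowth : ∀ (e : E) (x : ℝ), ‖f (e, x)‖ ≤ M * (1 + ‖e‖ + |x|))
    (df : E × ℝ → E × ℝ → F)
    (hdf : ∀ p d : E × ℝ,
      Tendsto (fun lam : ℝ => lam⁻¹ • (f (p + lam • d) - f p)) (𝓝[>] (0 : ℝ)) (𝓝 (df p d))) :
    ∃ Ft : C(Set.Icc (0 : ℝ) T, E) × Lp ℝ q (volume.restrict (Set.Ioc (0 : ℝ) T)) →
        Lp F q (volume.restrict (Set.Ioc (0 : ℝ) T)),
      (∀ yv : C(Set.Icc (0 : ℝ) T, E) × Lp ℝ q (volume.restrict (Set.Ioc (0 : ℝ) T)),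
        (Ft yv : ℝ → F) =ᵐ[volume.restrict (Set.Ioc (0 : ℝ) T)]
          fun t => f (Set.IccExtend hT.le yv.1 t, yv.2 t)) ∧
      ∀ yv : C(Set.Icc (0 : ℝ) T, E) × Lp ℝ q (volume.restrict (Set.Ioc (0 : ℝ) T)),
        ∃ D : C(Set.Icc (0 : ℝ) T, E) × Lp ℝ q (volume.restrict (Set.Ioc (0 : ℝ) T)) →
            Lp F q (volume.restrict (Set.Ioc (0 : ℝ) T)),
          (∀ hl : C(Set.Icc (0 : ℝ) T, E) × Lp ℝ q (volume.restrict (Set.Ioc (0 : ℝ) T)),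
            (D hl : ℝ → F) =ᵐ[volume.restrict (Set.Ioc (0 : ℝ) T)]
              fun t => df (Set.IccExtend hT.le yv.1 t, yv.2 t)
                (Set.IccExtend hT.le hl.1 t, hl.2 t)) ∧
          (∀ hl, HadamardDerivAt Ft yv hl (D hl)) ∧
          ∃ C : ℝ≥0, LipschitzWith C D := by
  have hFq : ∀ z, MemLp (f ∘ pairEval hT.le z) q (volume.restrict (Ioc 0 T)) :=
    memLp_comp_pairEval hT.le hfc hM.le fun p => hgrowth p.1 p.2
  refine ⟨nemytskii hT.le hFq, coeFn_nemytskii hT.le hFq, fun yv => ?_⟩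
  obtain ⟨δ, hδ, L, hL⟩ := exists_forall_lipschitzOnWith_closedBall_pairEval hT.le (fun e => by
      obtain ⟨δ, hδ, L, hL, h⟩ := hlip e
      exact ⟨δ, hδ, _, lipschitzOnWith_closedBall_prod_of_norm_sub_le hL.le h⟩) yv
  have hDq : ∀ hl : C(Icc (0 : ℝ) T, E) × Lp ℝ q (volume.restrict (Ioc 0 T)),
      MemLp (fun t => df (pairEval hT.le yv t) (pairEval hT.le hl t)) q
        (volume.restrict (Ioc 0 T)) :=
    fun hl => memLp_of_dirDerivAt_pairEval hT.le hfc hδ hL fun t => hdf _ _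
  refine ⟨fun hl => (hDq hl).toLp _, fun hl => (hDq hl).coeFn_toLp, fun hl => ?_,
    ⟨_, lipschitzOnWith_univ.1 <|
      lipschitzOnWith_of_ae_norm_sub_le_pairEval hT.le (L := L) fun hl _ hl' _ => ?_⟩⟩
  · exact HadamardDerivAt.of_lipschitzOnWith (prod_mem_nhds (closedBall_mem_nhds _ hδ) univ_mem)
      (lipschitzOnWith_nemytskii hT.le hFq hL)
      (dirDerivAt_nemytskii hT.le hq2 hfc hFq hδ hL (fun t => hdf _ _) (hDq hl))
  · filter_upwards [(hDq hl).coeFn_toLp, (hDq hl').coeFn_toLp] with t h h'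
    rw [h, h']
    exact ((hL t).lipschitzWith_of_dirDerivAt (prod_mem_nhds (closedBall_mem_nhds _ hδ) univ_mem)
      (hdf _)).norm_sub_le _ _

/-- The Nemytskii operator `F̃(y,v)(t) = f(y(t),v(t))` is well defined from
`C([0,T];E) × L^q((0,T);ℝ)` to `L^q((0,T);F)` and Hadamard directionally differentiable at
every `(y,v)`, with derivative given pointwise by the directional derivative of `f`; for
fixed `(y,v)` the derivative is Lipschitz continuous in the direction. -/
theorem nemytskii_hadamard_differentiable {E F : Type*}
    [NormedAddCommGroup E] [NormedSpace ℝ E] [CompleteSpace E]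
    [NormedAddCommGroup F] [NormedSpace ℝ F] [CompleteSpace F]
    (T : ℝ) (hT : 0 < T) (q : ℝ≥0∞) (hq1 : 1 < q) (hq2 : q ≠ ⊤) [Fact (1 ≤ q)]
    (M : ℝ) (hM : 0 < M)
    (f : E × ℝ → F) (hfc : Continuous f)
    (hlip : ∀ e₀ : E, ∃ δ > (0 : ℝ), ∃ L > (0 : ℝ),
      ∀ e₁ e₂ : E, ‖e₁ - e₀‖ ≤ δ → ‖e₂ - e₀‖ ≤ δ →
        ∀ x₁ x₂ : ℝ, ‖f (e₁, x₁) - f (e₂, x₂)‖ ≤ L * (‖e₁ - e₂‖ + |x₁ - x₂|))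
    (hgrowth : ∀ (e : E) (x : ℝ), ‖f (e, x)‖ ≤ M * (1 + ‖e‖ + |x|))
    (df : E × ℝ → E × ℝ → F)
    (hdf : ∀ p d : E × ℝ,
      Tendsto (fun lam : ℝ => lam⁻¹ • (f (p + lam • d) - f p)) (𝓝[>] (0 : ℝ)) (𝓝 (df p d))) :
    ∃ Ft : C(Set.Icc (0 : ℝ) T, E) × Lp ℝ q (volume.restrict (Set.Ioc (0 : ℝ) T)) →
        Lp F q (volume.restrict (Set.Ioc (0 : ℝ) T)),
      (∀ yv : C(Set.Icc (0 : ℝ) T, E) × Lp ℝ q (volume.restrict (Set.Ioc (0 : ℝ) T)),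
        (Ft yv : ℝ → F) =ᵐ[volume.restrict (Set.Ioc (0 : ℝ) T)]
          fun t => f (Set.IccExtend hT.le yv.1 t, yv.2 t)) ∧
      ∀ yv : C(Set.Icc (0 : ℝ) T, E) × Lp ℝ q (volume.restrict (Set.Ioc (0 : ℝ) T)),
        ∃ D : C(Set.Icc (0 : ℝ) T, E) × Lp ℝ q (volume.restrict (Set.Ioc (0 : ℝ) T)) →
            Lp F q (volume.restrict (Set.Ioc (0 : ℝ) T)),
          (∀ hl : C(Set.Icc (0 : ℝ) T, E) × Lp ℝ q (volume.restrict (Set.Ioc (0 : ℝ) T)),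
            (D hl : ℝ → F) =ᵐ[volume.restrict (Set.Ioc (0 : ℝ) T)]
              fun t => df (Set.IccExtend hT.le yv.1 t, yv.2 t)
                (Set.IccExtend hT.le hl.1 t, hl.2 t)) ∧
          (∀ hl, HadamardDerivAt Ft yv hl (D hl)) ∧
          ∃ C : ℝ≥0, LipschitzWith C D :=
  nemytskii_hadamard_differentiable_general T hT q hq2 M hM f hfc hlip hgrowth df hdf
end
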